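/- arXiv:0905.3983 — 9 statements merged into one kernel-verified Lean document; each statement's English description precedes it below -/
import Mathlib

section
/- Let A_1,...,A_n be events in a probability space with a negative dependency graph G (i.e., for every i and every set S of non-neighbors of i with Pr(∧_{j∈S} ¬A_j) > 0, we have Pr(A_i | ∧_{j∈S} ¬A_j) ≤ Pr(A_i)). If there exist real numbers x_1,...,x_n ∈ [0,1) such that Pr(A_i) ≤ x_i ∏_{ij∈E(G)} (1−x_j) for all i, then Pr(∧_{i=1}^n ¬A_i) ≥ ∏_{i=1}^n (1−x_i). -/
/-!
Write `C S = noneOf A S` for the event that none of the `A j`, `j ∈ S`, occurs. By strong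
induction on `S` one shows `Pr(A i ∩ C S) ≤ x i · Pr(C S)` for every `i ∉ S`. Splitting `S` into
the neighbours `S₁` and the non-neighbours `S₂` of `i`, negative dependence gives
`Pr(A i ∩ C S) ≤ Pr(A i ∩ C S₂) ≤ Pr(A i) · Pr(C S₂)` (it applies because the telescoping bound
below, used for `S₂`, makes `Pr(C S₂) ≥ ∏_{j ∈ S₂} (1 - x j) > 0`), while removing the elements
of `S₁` one at a time and applying the induction hypothesis at each step gives
`Pr(C S) ≥ ∏_{j ∈ S₁} (1 - x j) · Pr(C S₂)`; together with the hypothesis on `Pr(A i)` this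
closes the induction. The same telescoping from `C ∅ = Ω` to `C [n]` yields the theorem.
-/

open MeasureTheory Finset

namespace LLL

variable {ι Ω : Type*} {A : ι → Set Ω}

def noneOf (A : ι → Set Ω) (S : Finset ι) : Set Ω := ⋂ j ∈ S, (A j)ᶜ

@[simp]
lemma noneOf_empty : noneOf A ∅ = Set.univ := by simp [noneOf]

lemma noneOf_insert [DecidableEq ι] (i : ι) (S : Finset ι) :
    noneOf A (insert i S) = noneOf A S \ A i := by
  simp only [noneOf, set_biInter_insert, Set.sdiff_eq, Set.inter_comm]

lemma noneOf_anti {S T : Finset ι} (h : S ⊆ T) : noneOf A T ⊆ noneOf A S :=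
  Set.biInter_subset_biInter_left h

lemma noneOf_univ [Fintype ι] : noneOf A univ = ⋂ i, (A i)ᶜ := by simp [noneOf]

variable [MeasurableSpace Ω] {μ : Measure Ω} {x : ι → ℝ}

lemma measureReal_noneOf_insert [DecidableEq ι] [IsFiniteMeasure μ] {i : ι}
    (hAi : MeasurableSet (A i)) (S : Finset ι) :
    μ.real (noneOf A (insert i S)) = μ.real (noneOf A S) - μ.real (A i ∩ noneOf A S) := by
  rw [noneOf_insert, ← measureReal_inter_add_sdiff (s := noneOf A S) hAi, Set.inter_comm]
  ring

lemma prod_mul_measureReal_noneOf_le [DecidableEq ι] [IsFiniteMeasure μ]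
    (hA : ∀ i, MeasurableSet (A i)) (hx : ∀ i, x i ≤ 1) {T U : Finset ι} (hTU : Disjoint T U)
    (hbound : ∀ W ⊂ T ∪ U, ∀ i ∉ W, μ.real (A i ∩ noneOf A W) ≤ x i * μ.real (noneOf A W)) :
    (∏ j ∈ T, (1 - x j)) * μ.real (noneOf A U) ≤ μ.real (noneOf A (T ∪ U)) := by
  induction T using Finset.induction_on with
  | empty => simp
  | @insert a T haT ih =>
    have haTU : a ∉ T ∪ U := by
      simp only [mem_union, not_or]
      exact ⟨haT, disjoint_left.mp hTU (mem_insert_self a T)⟩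
    have hsub : T ∪ U ⊂ insert a T ∪ U := by
      rw [insert_union]
      exact ssubset_insert haTU
    have ih := ih (disjoint_insert_left.mp hTU).2 fun W hW => hbound W (hW.trans hsub)
    have hstep := hbound _ hsub a haTU
    have hxa : 0 ≤ 1 - x a := sub_nonneg.mpr (hx a)
    rw [insert_union, measureReal_noneOf_insert (hA a), prod_insert haT, mul_assoc]
    calc (1 - x a) * ((∏ j ∈ T, (1 - x j)) * μ.real (noneOf A U))
        ≤ (1 - x a) * μ.real (noneOf A (T ∪ U)) := mul_le_mul_of_nonneg_left ih hxa
      _ ≤ _ := by linarith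

lemma prod_le_measureReal_noneOf [DecidableEq ι] [IsProbabilityMeasure μ]
    (hA : ∀ i, MeasurableSet (A i)) (hx : ∀ i, x i ≤ 1) {S : Finset ι}
    (hbound : ∀ W ⊂ S, ∀ i ∉ W, μ.real (A i ∩ noneOf A W) ≤ x i * μ.real (noneOf A W)) :
    ∏ j ∈ S, (1 - x j) ≤ μ.real (noneOf A S) := by
  have h := prod_mul_measureReal_noneOf_le hA hx (disjoint_empty_right S) (by rwa [union_empty])
  rwa [noneOf_empty, probReal_univ, mul_one, union_empty] at h

lemma measureReal_inter_noneOf_le [Fintype ι] [DecidableEq ι] [IsProbabilityMeasure μ]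
    (hA : ∀ i, MeasurableSet (A i)) (G : SimpleGraph ι) [DecidableRel G.Adj]
    (hneg : ∀ (i : ι) (S : Finset ι), (∀ j ∈ S, j ≠ i ∧ ¬ G.Adj i j) →
      0 < μ (noneOf A S) → μ (A i ∩ noneOf A S) ≤ μ (A i) * μ (noneOf A S))
    (hx : ∀ i, x i ∈ Set.Ico (0 : ℝ) 1)
    (hcond : ∀ i, μ.real (A i) ≤ x i * ∏ j ∈ G.neighborFinset i, (1 - x j))
    (S : Finset ι) : ∀ i ∉ S, μ.real (A i ∩ noneOf A S) ≤ x i * μ.real (noneOf A S) := by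
  induction S using Finset.strongInduction with
  | H S ih =>
    intro i hi
    set S₁ := S.filter (G.Adj i ·)
    set S₂ := S.filter (¬ G.Adj i ·)
    have hS₂ : S₂ ⊆ S := filter_subset _ S
    have hC₂ : 0 < μ.real (noneOf A S₂) :=
      (prod_pos fun j _ => sub_pos.mpr (hx j).2).trans_le <| prod_le_measureReal_noneOf hA
        (fun j => (hx j).2.le) fun W hW => ih W (hW.trans_subset hS₂)
    have hneg₂ : μ.real (A i ∩ noneOf A S₂) ≤ μ.real (A i) * μ.real (noneOf A S₂) := by
      have hnonadj : ∀ j ∈ S₂, j ≠ i ∧ ¬ G.Adj i j := fun j hj =>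
        ⟨fun h => hi (h ▸ hS₂ hj), (mem_filter.mp hj).2⟩
      rw [measureReal_def, measureReal_def, measureReal_def, ← ENNReal.toReal_mul]
      exact ENNReal.toReal_mono (by finiteness)
        (hneg i S₂ hnonadj (ENNReal.toReal_pos_iff.mp hC₂).1)
    have hneighbours : ∏ j ∈ G.neighborFinset i, (1 - x j) ≤ ∏ j ∈ S₁, (1 - x j) :=
      prod_le_prod_of_subset_of_le_one (fun j hj => by simpa using (mem_filter.mp hj).2)
        (fun j _ => sub_nonneg.mpr (hx j).2.le) fun j _ _ => by linarith [(hx j).1]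
    have hchain : (∏ j ∈ S₁, (1 - x j)) * μ.real (noneOf A S₂) ≤ μ.real (noneOf A S) := by
      have h := prod_mul_measureReal_noneOf_le hA (fun j => (hx j).2.le)
        (disjoint_filter_filter_not S S (G.Adj i)) (by rwa [filter_union_filter_not_eq])
      rwa [filter_union_filter_not_eq] at h
    calc μ.real (A i ∩ noneOf A S)
        ≤ μ.real (A i ∩ noneOf A S₂) :=
          measureReal_mono (Set.inter_subset_inter_right _ (noneOf_anti hS₂))
      _ ≤ μ.real (A i) * μ.real (noneOf A S₂) := hneg₂
      _ ≤ x i * (∏ j ∈ S₁, (1 - x j)) * μ.real (noneOf A S₂) := by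
          gcongr
          calc μ.real (A i) ≤ _ := hcond i
            _ ≤ _ := mul_le_mul_of_nonneg_left hneighbours (hx i).1
      _ ≤ x i * μ.real (noneOf A S) := by
          rw [mul_assoc]
          exact mul_le_mul_of_nonneg_left hchain (hx i).1

end LLL

/-- **Lovász Local Lemma with negative dependency graphs.**
If `G` is a negative dependency graph for events `A 1, ..., A n` and there are
numbers `x i ∈ [0,1)` with `Pr(A i) ≤ x i * ∏_{ij ∈ E(G)} (1 - x j)`, then
`Pr(∧ᵢ ¬A i) ≥ ∏ᵢ (1 - x i)`. -/
theorem lll_negative_dependency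
    {Ω : Type*} [MeasurableSpace Ω] (μ : Measure Ω) [IsProbabilityMeasure μ]
    (n : ℕ) (A : Fin n → Set Ω) (hA : ∀ i, MeasurableSet (A i))
    (G : SimpleGraph (Fin n)) [DecidableRel G.Adj]
    (hneg : ∀ (i : Fin n) (S : Finset (Fin n)),
      (∀ j ∈ S, j ≠ i ∧ ¬ G.Adj i j) →
      0 < μ (⋂ j ∈ S, (A j)ᶜ) →
      μ (A i ∩ ⋂ j ∈ S, (A j)ᶜ) ≤ μ (A i) * μ (⋂ j ∈ S, (A j)ᶜ))
    (x : Fin n → ℝ) (hx : ∀ i, x i ∈ Set.Ico (0 : ℝ) 1)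
    (hcond : ∀ i, (μ (A i)).toReal ≤ x i * ∏ j ∈ G.neighborFinset i, (1 - x j)) :
    ∏ i, (1 - x i) ≤ (μ (⋂ i, (A i)ᶜ)).toReal := by
  have hbound := LLL.measureReal_inter_noneOf_le hA G hneg hx hcond
  rw [← LLL.noneOf_univ]
  exact LLL.prod_le_measureReal_noneOf hA (fun i => (hx i).2.le) fun W _ => hbound W
end

section
/- Let A_1,...,A_n be events with a negative dependency graph G, and let 0 < ε < 0.14. If Pr(A_i) < ε and ∑_{j : ij∈E(G)} Pr(A_j) < ε for every i, then Pr(∧_{i=1}^n ¬A_i) ≥ exp(−(1+3ε) ∑_{i=1}^n Pr(A_i)). -/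
set_option maxHeartbeats 1000000

open MeasureTheory Finset

private lemma lll_aux_one_sub_sum_le_prod {ι : Type*} [DecidableEq ι] (s : Finset ι) (f : ι → ℝ)
    (h0 : ∀ j ∈ s, 0 ≤ f j) (h1 : ∀ j ∈ s, f j ≤ 1) :
    1 - ∑ j ∈ s, f j ≤ ∏ j ∈ s, (1 - f j) := by
  induction s using Finset.induction_on with
  | empty => simp
  | @insert a s' ha ih =>
    rw [Finset.sum_insert ha, Finset.prod_insert ha]
    have hs0 : (0:ℝ) ≤ ∑ j ∈ s', f j :=
      Finset.sum_nonneg fun j hj => h0 j (Finset.mem_insert_of_mem hj)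
    have ih' := ih (fun j hj => h0 j (Finset.mem_insert_of_mem hj))
      (fun j hj => h1 j (Finset.mem_insert_of_mem hj))
    have ha0 := h0 a (Finset.mem_insert_self a s')
    have ha1 := h1 a (Finset.mem_insert_self a s')
    nlinarith

private lemma lll_aux_exp_neg_le_quadratic (u : ℝ) (hu : 0 ≤ u) :
    Real.exp (-u) ≤ 1 - u + u^2/2 := by
  have h := Real.quadratic_le_exp_of_nonneg hu
  have he : Real.exp (-u) * Real.exp u = 1 := by rw [← Real.exp_add]; simp
  nlinarith [mul_le_mul_of_nonneg_left h (Real.exp_pos (-u)).le, sq_nonneg (u^2), sq_nonneg u]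

/-- If `G` is a negative dependency graph for `A 1, ..., A n`, `0 < ε < 0.14`,
`Pr(A i) < ε` and `∑_{j : ij ∈ E(G)} Pr(A j) < ε` for every `i`, then
`Pr(∧ᵢ ¬A i) ≥ exp(-(1+3ε) ∑ᵢ Pr(A i))`. -/
theorem lll_exponential_lower_bound
    {Ω : Type*} [MeasurableSpace Ω] (μ : Measure Ω) [IsProbabilityMeasure μ]
    (n : ℕ) (A : Fin n → Set Ω) (hA : ∀ i, MeasurableSet (A i))
    (G : SimpleGraph (Fin n)) [DecidableRel G.Adj]
    (hneg : ∀ (i : Fin n) (S : Finset (Fin n)),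
      (∀ j ∈ S, j ≠ i ∧ ¬ G.Adj i j) →
      0 < μ (⋂ j ∈ S, (A j)ᶜ) →
      μ (A i ∩ ⋂ j ∈ S, (A j)ᶜ) ≤ μ (A i) * μ (⋂ j ∈ S, (A j)ᶜ))
    (ε : ℝ) (hε0 : 0 < ε) (hε1 : ε < 0.14)
    (hsmall : ∀ i, (μ (A i)).toReal < ε)
    (hnbr : ∀ i, ∑ j ∈ G.neighborFinset i, (μ (A j)).toReal < ε) :
    Real.exp (-(1 + 3 * ε) * ∑ i, (μ (A i)).toReal) ≤ (μ (⋂ i, (A i)ᶜ)).toReal := by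
  classical
  -- abbreviations
  set K : ℝ := 1 + 3 * ε with hK_def
  set c : ℝ := K - K^2 * ε / 2 with hc_def
  -- arithmetic facts
  have hc1 : 1 ≤ c := by rw [hc_def, hK_def]; nlinarith [sq_nonneg ε, mul_pos hε0 hε0]
  have hc0 : 0 < c := lt_of_lt_of_le one_pos hc1
  have hcε : c * ε < 1 := by rw [hc_def, hK_def]; nlinarith
  have hmain : 1 ≤ c * (1 - c * ε) := by
    rw [hc_def, hK_def]
    nlinarith [sq_nonneg ε, pow_pos hε0 3, pow_pos hε0 4, pow_pos hε0 5, pow_pos hε0 6,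
      sq_nonneg (ε - 0.14)]
  clear_value K c
  -- the weights
  set x : Fin n → ℝ := fun i => c * (μ (A i)).toReal with hx_def
  clear_value x
  have hp0 : ∀ i : Fin n, 0 ≤ (μ (A i)).toReal := fun i => ENNReal.toReal_nonneg
  have hx0 : ∀ i, 0 ≤ x i := fun i => by rw [hx_def]; exact mul_nonneg hc0.le (hp0 i)
  have hxlt : ∀ i, x i < c * ε := fun i => by
    rw [hx_def]; exact mul_lt_mul_of_pos_left (hsmall i) hc0
  have hx1 : ∀ i, x i < 1 := fun i => lt_trans (hxlt i) hcε
  -- measure splitting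
  have split : ∀ (j : Fin n) (T : Finset (Fin n)),
      (μ (⋂ k ∈ insert j T, (A k)ᶜ)).toReal
        = (μ (⋂ k ∈ T, (A k)ᶜ)).toReal - (μ (A j ∩ ⋂ k ∈ T, (A k)ᶜ)).toReal := by
    intro j T
    have h1 : (⋂ k ∈ insert j T, (A k)ᶜ) = (⋂ k ∈ T, (A k)ᶜ) \ A j := by
      ext y; simp [Set.mem_diff]; tauto
    have h2 := measure_inter_add_diff (μ := μ) (⋂ k ∈ T, (A k)ᶜ) (hA j)
    have h3 := congrArg ENNReal.toReal h2
    rw [ENNReal.toReal_add (measure_ne_top μ _) (measure_ne_top μ _)] at h3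
    rw [h1, Set.inter_comm (A j)]
    linarith
  -- the relative lower bound, assuming the inductive claim on proper subsets
  have Rgen : ∀ (S : Finset (Fin n)),
      (∀ S' : Finset (Fin n), S' ⊂ S → ∀ i ∉ S',
        (μ (A i ∩ ⋂ j ∈ S', (A j)ᶜ)).toReal ≤ x i * (μ (⋂ j ∈ S', (A j)ᶜ)).toReal) →
      ∀ (B T : Finset (Fin n)), B ∪ T ⊆ S → Disjoint B T →
      (∏ j ∈ B, (1 - x j)) * (μ (⋂ j ∈ T, (A j)ᶜ)).toReal
        ≤ (μ (⋂ j ∈ B ∪ T, (A j)ᶜ)).toReal := by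
    intro S hQ B
    induction B using Finset.induction_on with
    | empty => intro T h hd; simp
    | @insert a B' ha ih =>
      intro T hsub hd
      have haT : a ∉ T := fun h =>
        (Finset.disjoint_left.mp hd (Finset.mem_insert_self a B')) h
      have hd' : Disjoint B' T :=
        Finset.disjoint_of_subset_left (Finset.subset_insert a B') hd
      have hsub' : B' ∪ T ⊆ S :=
        le_trans (Finset.union_subset_union_left (Finset.subset_insert a B')) hsub
      have haBT : a ∉ B' ∪ T := by
        simp only [Finset.mem_union]; tauto
      have haS : a ∈ S := hsub (by simp)
      have hss : B' ∪ T ⊂ S :=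
        (Finset.ssubset_iff_of_subset hsub').mpr ⟨a, haS, haBT⟩
      have hq := hQ (B' ∪ T) hss a haBT
      have hins : insert a B' ∪ T = insert a (B' ∪ T) := Finset.insert_union a B' T
      rw [hins, split a (B' ∪ T), Finset.prod_insert ha]
      have hih := ih T hsub' hd'
      have hxa := hx1 a
      have hxa0 := hx0 a
      have hnn : (0:ℝ) ≤ (μ (⋂ j ∈ T, (A j)ᶜ)).toReal := ENNReal.toReal_nonneg
      have hprod0 : (0:ℝ) ≤ ∏ j ∈ B', (1 - x j) :=
        Finset.prod_nonneg fun j _ => by linarith [hx1 j, hx0 j]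
      nlinarith
  -- the main inductive claim
  have step : ∀ S : Finset (Fin n),
      (∀ S' : Finset (Fin n), S' ⊂ S → ∀ i ∉ S',
        (μ (A i ∩ ⋂ j ∈ S', (A j)ᶜ)).toReal ≤ x i * (μ (⋂ j ∈ S', (A j)ᶜ)).toReal) →
      ∀ i ∉ S,
        (μ (A i ∩ ⋂ j ∈ S, (A j)ᶜ)).toReal ≤ x i * (μ (⋂ j ∈ S, (A j)ᶜ)).toReal := by
    intro S hQ i hiS
    set N : Finset (Fin n) := S.filter (fun j => G.Adj i j) with hN_def
    set T : Finset (Fin n) := S.filter (fun j => ¬ G.Adj i j) with hT_def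
    have hNT : N ∪ T = S := Finset.filter_union_filter_not_eq _ S
    have hdNT : Disjoint N T := Finset.disjoint_filter_filter_not S S _
    have hTS : T ⊆ S := Finset.filter_subset _ S
    -- positivity of μ(∩_T)
    have hTpos' : (∏ j ∈ T, (1 - x j)) * (μ (⋂ j ∈ (∅ : Finset (Fin n)), (A j)ᶜ)).toReal
        ≤ (μ (⋂ j ∈ T ∪ ∅, (A j)ᶜ)).toReal := by
      refine Rgen S hQ T ∅ ?_ (Finset.disjoint_empty_right T)
      rw [Finset.union_empty]; exact hTS
    rw [Finset.union_empty] at hTpos'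
    have hemp : (μ (⋂ j ∈ (∅ : Finset (Fin n)), (A j)ᶜ)).toReal = 1 := by simp
    rw [hemp, mul_one] at hTpos'
    have hprodTpos : (0:ℝ) < ∏ j ∈ T, (1 - x j) :=
      Finset.prod_pos fun j _ => by linarith [hx1 j]
    have hTr : 0 < (μ (⋂ j ∈ T, (A j)ᶜ)).toReal := lt_of_lt_of_le hprodTpos hTpos'
    have hTpos : 0 < μ (⋂ j ∈ T, (A j)ᶜ) := (ENNReal.toReal_pos_iff.mp hTr).1
    -- negative dependency bound
    have hcond : ∀ j ∈ T, j ≠ i ∧ ¬ G.Adj i j := by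
      intro j hj
      rw [hT_def, Finset.mem_filter] at hj
      exact ⟨fun h => hiS (h ▸ hj.1), hj.2⟩
    have hneg' := hneg i T hcond hTpos
    have hneg'' : (μ (A i ∩ ⋂ j ∈ T, (A j)ᶜ)).toReal
        ≤ (μ (A i)).toReal * (μ (⋂ j ∈ T, (A j)ᶜ)).toReal := by
      rw [← ENNReal.toReal_mul]
      exact ENNReal.toReal_mono (ENNReal.mul_ne_top (measure_ne_top μ _) (measure_ne_top μ _)) hneg'
    -- monotonicity
    have hsubsets : (⋂ j ∈ S, (A j)ᶜ) ⊆ ⋂ j ∈ T, (A j)ᶜ := by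
      intro y hy
      simp only [Set.mem_iInter] at *
      exact fun j hj => hy j (hTS hj)
    have hmono : (μ (A i ∩ ⋂ j ∈ S, (A j)ᶜ)).toReal ≤ (μ (A i ∩ ⋂ j ∈ T, (A j)ᶜ)).toReal :=
      ENNReal.toReal_mono (measure_ne_top μ _)
        (measure_mono (Set.inter_subset_inter_right _ hsubsets))
    -- lower bound on μ(∩_S) in terms of μ(∩_T)
    have hlow : (∏ j ∈ N, (1 - x j)) * (μ (⋂ j ∈ T, (A j)ᶜ)).toReal
        ≤ (μ (⋂ j ∈ S, (A j)ᶜ)).toReal := by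
      have := Rgen S hQ N T (by rw [hNT]) hdNT
      rwa [hNT] at this
    -- the neighbour sum bound
    have hNsub : N ⊆ G.neighborFinset i := by
      intro j hj
      rw [hN_def, Finset.mem_filter] at hj
      exact (G.mem_neighborFinset i j).mpr hj.2
    have hsumN : ∑ j ∈ N, x j ≤ c * ε := by
      have h1 : ∑ j ∈ N, (μ (A j)).toReal ≤ ∑ j ∈ G.neighborFinset i, (μ (A j)).toReal :=
        Finset.sum_le_sum_of_subset_of_nonneg hNsub (fun j _ _ => hp0 j)
      have h2 : ∑ j ∈ N, x j = c * ∑ j ∈ N, (μ (A j)).toReal := by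
        rw [Finset.mul_sum, hx_def]
      rw [h2]
      have := hnbr i
      nlinarith
    have hprodN : 1 - c * ε ≤ ∏ j ∈ N, (1 - x j) := by
      have := lll_aux_one_sub_sum_le_prod N x (fun j _ => hx0 j) (fun j _ => (hx1 j).le)
      linarith
    -- conclude
    have hlow2 : (1 - c * ε) * (μ (⋂ j ∈ T, (A j)ᶜ)).toReal
        ≤ (μ (⋂ j ∈ S, (A j)ᶜ)).toReal := by
      have hTnn : (0:ℝ) ≤ (μ (⋂ j ∈ T, (A j)ᶜ)).toReal := ENNReal.toReal_nonneg
      nlinarith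
    have hfin1 : (μ (A i ∩ ⋂ j ∈ S, (A j)ᶜ)).toReal
        ≤ (μ (A i)).toReal * (μ (⋂ j ∈ T, (A j)ᶜ)).toReal := le_trans hmono hneg''
    have hxi : x i = c * (μ (A i)).toReal := by rw [hx_def]
    rw [hxi]
    nlinarith [hp0 i, ENNReal.toReal_nonneg (a := μ (⋂ j ∈ T, (A j)ᶜ)),
      mul_le_mul_of_nonneg_left hlow2 (mul_nonneg hc0.le (hp0 i)),
      mul_le_mul_of_nonneg_right hmain (mul_nonneg (hp0 i) (ENNReal.toReal_nonneg (a := μ (⋂ j ∈ T, (A j)ᶜ))))]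
  -- strong induction via cardinality
  have key : ∀ (m : ℕ) (S : Finset (Fin n)), S.card ≤ m → ∀ i ∉ S,
      (μ (A i ∩ ⋂ j ∈ S, (A j)ᶜ)).toReal ≤ x i * (μ (⋂ j ∈ S, (A j)ᶜ)).toReal := by
    intro m
    induction m with
    | zero =>
      intro S hS
      have : S = ∅ := Finset.card_eq_zero.mp (Nat.le_zero.mp hS)
      subst this
      exact step ∅ (fun S' h => absurd h (by simp))
    | succ m ih =>
      intro S hS
      exact step S (fun S' hS' => ih S' (by
        have := Finset.card_lt_card hS'
        omega))
  have keyall : ∀ (S : Finset (Fin n)), ∀ i ∉ S,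
      (μ (A i ∩ ⋂ j ∈ S, (A j)ᶜ)).toReal ≤ x i * (μ (⋂ j ∈ S, (A j)ᶜ)).toReal :=
    fun S => key S.card S le_rfl
  -- final bound
  have hfinal : (∏ j ∈ (univ : Finset (Fin n)), (1 - x j)) ≤ (μ (⋂ i, (A i)ᶜ)).toReal := by
    have h := Rgen univ (fun S' _ => keyall S') univ ∅ (by simp) (Finset.disjoint_empty_right _)
    rw [Finset.union_empty] at h
    have hemp : (μ (⋂ j ∈ (∅ : Finset (Fin n)), (A j)ᶜ)).toReal = 1 := by simp
    rw [hemp, mul_one] at h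
    have huniv : (⋂ j ∈ (univ : Finset (Fin n)), (A j)ᶜ) = ⋂ i, (A i)ᶜ := by simp
    rwa [huniv] at h
  refine le_trans ?_ hfinal
  -- exp(-K ∑ p) ≤ ∏ (1 - x i)
  have hsum : -K * ∑ i, (μ (A i)).toReal = ∑ i : Fin n, (-(K * (μ (A i)).toReal)) := by
    rw [neg_mul, Finset.mul_sum, ← Finset.sum_neg_distrib]
  rw [hsum, Real.exp_sum]
  refine Finset.prod_le_prod (fun i _ => (Real.exp_pos _).le) (fun i _ => ?_)
  have hpi0 := hp0 i
  have hpi := hsmall i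
  have hu : 0 ≤ K * (μ (A i)).toReal := mul_nonneg (by rw [hK_def]; linarith) hpi0
  have hq := lll_aux_exp_neg_le_quadratic (K * (μ (A i)).toReal) hu
  have hKc : K - c = K^2 * ε / 2 := by rw [hc_def]; ring
  have hK1 : (1:ℝ) ≤ K := by rw [hK_def]; linarith
  have hxi : x i = c * (μ (A i)).toReal := by rw [hx_def]
  show Real.exp (-(K * (μ (A i)).toReal)) ≤ 1 - x i
  rw [hxi]
  have h5 : K^2 * ((μ (A i)).toReal * (μ (A i)).toReal) ≤ K^2 * (ε * (μ (A i)).toReal) :=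
    mul_le_mul_of_nonneg_left (mul_le_mul_of_nonneg_right hpi.le hpi0) (sq_nonneg K)
  refine hq.trans ?_
  have h7 : (K * (μ (A i)).toReal)^2 = K^2 * ((μ (A i)).toReal * (μ (A i)).toReal) := by ring
  have h8 : c * (μ (A i)).toReal = K * (μ (A i)).toReal - K^2 * (ε * (μ (A i)).toReal) / 2 := by
    rw [hc_def]; ring
  rw [h7, h8]
  linarith
end

section
/- Let A_1,...,A_n be events with an ε-near-positive dependency graph G, where 0 < ε < 1. Then Pr(∧_{i=1}^n ¬A_i) ≤ ∏_{i=1}^n [1 − (1−ε)Pr(A_i)]. -/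
/-!
Let `B` be the event that no `A j` with `j ∈ S` occurs, and `i ∉ S`. Since `A i` meets the
events of its neighbours only in null sets, `A i ∩ B` agrees up to a null set with `A i ∩ B'`,
where `B' ⊇ B` only involves the non-neighbours of `i` in `S`. Near-positivity for `B'` then
gives `Pr(A i ∩ B) ≥ (1 - ε) Pr(A i) Pr(B)`, that is `Pr(B \ A i) ≤ (1 - (1 - ε) Pr(A i)) Pr(B)`,
and the bound follows by adding the events one at a time.
-/

open MeasureTheory Finset

section

variable {Ω ι : Type*} [MeasurableSpace Ω] {μ : Measure Ω}

theorem measure_inter_biInter_compl_filter_le {s : Set Ω} {A : ι → Set Ω} {S : Finset ι}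
    {p : ι → Prop} [DecidablePred p] (hnull : ∀ j ∈ S, ¬ p j → μ (s ∩ A j) = 0) :
    μ (s ∩ ⋂ j ∈ S.filter p, (A j)ᶜ) ≤ μ (s ∩ ⋂ j ∈ S, (A j)ᶜ) := by
  have hae : ∀ᵐ x ∂μ, ∀ j ∈ S, ¬ p j → x ∉ s ∩ A j := by
    refine (Filter.eventually_all_finset S).2 fun j hj ↦ ?_
    by_cases hpj : p j
    · exact .of_forall fun _ h ↦ absurd hpj h
    · filter_upwards [measure_eq_zero_iff_ae_notMem.1 (hnull j hj hpj)] with x hx _ using hx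
  refine measure_mono_ae ?_
  filter_upwards [hae] with x hx ⟨hxs, hxT⟩
  refine ⟨hxs, Set.mem_iInter₂.2 fun j hj hxj ↦ ?_⟩
  by_cases hpj : p j
  · exact Set.mem_iInter₂.1 hxT j (mem_filter.2 ⟨hj, hpj⟩) hxj
  · exact hx j hj hpj ⟨hxs, hxj⟩

/-- Condition (2) is stated with the conditional probability multiplied out. -/
structure IsNearPositiveDependencyGraph (μ : Measure Ω) (A : ι → Set Ω) (G : SimpleGraph ι)
    (ε : ℝ) : Prop where
  measure_inter_eq_zero : ∀ i j, G.Adj i j → μ (A i ∩ A j) = 0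
  le_measureReal_inter : ∀ (i : ι) (T : Finset ι), (∀ j ∈ T, j ≠ i ∧ ¬ G.Adj i j) →
    0 < μ (⋂ j ∈ T, (A j)ᶜ) →
    (1 - ε) * μ.real (A i) * μ.real (⋂ j ∈ T, (A j)ᶜ) ≤ μ.real (A i ∩ ⋂ j ∈ T, (A j)ᶜ)

namespace IsNearPositiveDependencyGraph

variable {A : ι → Set Ω} {G : SimpleGraph ι} {ε : ℝ}

theorem le_measureReal_inter_biInter_compl [IsFiniteMeasure μ]
    (hG : IsNearPositiveDependencyGraph μ A G ε) (hε : ε ≤ 1) {i : ι} {S : Finset ι}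
    (hi : i ∉ S) :
    (1 - ε) * μ.real (A i) * μ.real (⋂ j ∈ S, (A j)ᶜ) ≤ μ.real (A i ∩ ⋂ j ∈ S, (A j)ᶜ) := by
  classical
  by_cases hS : μ (⋂ j ∈ S, (A j)ᶜ) = 0
  · simp [Measure.real, hS]
  set T := S.filter (¬ G.Adj i ·)
  have hST : (⋂ j ∈ S, (A j)ᶜ) ⊆ ⋂ j ∈ T, (A j)ᶜ :=
    Set.biInter_subset_biInter_left (coe_subset.2 (filter_subset _ _))
  have hT : ∀ j ∈ T, j ≠ i ∧ ¬ G.Adj i j := fun j hj ↦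
    ⟨fun h ↦ hi (h ▸ (mem_filter.1 hj).1), (mem_filter.1 hj).2⟩
  have hTpos : 0 < μ (⋂ j ∈ T, (A j)ᶜ) := (pos_iff_ne_zero.2 hS).trans_le (measure_mono hST)
  calc (1 - ε) * μ.real (A i) * μ.real (⋂ j ∈ S, (A j)ᶜ)
      ≤ (1 - ε) * μ.real (A i) * μ.real (⋂ j ∈ T, (A j)ᶜ) :=
          mul_le_mul_of_nonneg_left (measureReal_mono hST)
            (mul_nonneg (sub_nonneg.2 hε) measureReal_nonneg)
    _ ≤ μ.real (A i ∩ ⋂ j ∈ T, (A j)ᶜ) := hG.le_measureReal_inter i T hT hTpos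
    _ ≤ μ.real (A i ∩ ⋂ j ∈ S, (A j)ᶜ) := ENNReal.toReal_mono (measure_ne_top _ _)
        (measure_inter_biInter_compl_filter_le fun j _ hj ↦
          hG.measure_inter_eq_zero i j (not_not.1 hj))

theorem measureReal_biInter_compl_le_prod [IsProbabilityMeasure μ]
    (hG : IsNearPositiveDependencyGraph μ A G ε) (hA : ∀ i, MeasurableSet (A i))
    (hε0 : 0 ≤ ε) (hε1 : ε ≤ 1) (S : Finset ι) :
    μ.real (⋂ j ∈ S, (A j)ᶜ) ≤ ∏ j ∈ S, (1 - (1 - ε) * μ.real (A j)) := by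
  classical
  induction S using Finset.induction with
  | empty => simp
  | insert i S hi ih =>
    set B := ⋂ j ∈ S, (A j)ᶜ
    have hfactor : 0 ≤ 1 - (1 - ε) * μ.real (A i) := by
      nlinarith [measureReal_le_one (μ := μ) (s := A i), measureReal_nonneg (μ := μ) (s := A i)]
    have hsplit := measureReal_sdiff_add_inter (μ := μ) (s := B) (hA i)
    rw [set_biInter_insert, prod_insert hi, Set.inter_comm, ← Set.sdiff_eq]
    calc μ.real (B \ A i) = μ.real B - μ.real (A i ∩ B) := by
          rw [Set.inter_comm]; linarith
      _ ≤ (1 - (1 - ε) * μ.real (A i)) * μ.real B := by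
          linarith [hG.le_measureReal_inter_biInter_compl hε1 hi]
      _ ≤ _ := mul_le_mul_of_nonneg_left ih hfactor

end IsNearPositiveDependencyGraph

end

/-- If `G` is an `ε`-near-positive dependency graph for events `A 1, ..., A n`
(`0 < ε < 1`), then `Pr(∧ᵢ ¬A i) ≤ ∏ᵢ (1 - (1-ε) Pr(A i))`. -/
theorem near_positive_upper_bound
    {Ω : Type*} [MeasurableSpace Ω] (μ : Measure Ω) [IsProbabilityMeasure μ]
    (n : ℕ) (A : Fin n → Set Ω) (hA : ∀ i, MeasurableSet (A i))
    (G : SimpleGraph (Fin n))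
    (ε : ℝ) (hε0 : 0 < ε) (hε1 : ε < 1)
    (hdisj : ∀ i j, G.Adj i j → μ (A i ∩ A j) = 0)
    (hpos : ∀ (i : Fin n) (T : Finset (Fin n)),
      (∀ j ∈ T, j ≠ i ∧ ¬ G.Adj i j) →
      0 < μ (⋂ j ∈ T, (A j)ᶜ) →
      (1 - ε) * (μ (A i)).toReal * (μ (⋂ j ∈ T, (A j)ᶜ)).toReal
        ≤ (μ (A i ∩ ⋂ j ∈ T, (A j)ᶜ)).toReal) :
    (μ (⋂ i, (A i)ᶜ)).toReal ≤ ∏ i, (1 - (1 - ε) * (μ (A i)).toReal) := by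
  have hG : IsNearPositiveDependencyGraph μ A G ε := ⟨hdisj, hpos⟩
  simpa [measureReal_def] using hG.measureReal_biInter_compl_le_prod hA hε0.le hε1.le univ
end

section
/- Let G be a negative dependency graph for events A_1,...,A_n, and suppose the vertex set [n] is partitioned into classes such that any two events in the same class are mutually exclusive (have intersection of probability zero is not required: they have empty intersection). For each class J define B_J = ∨_{j∈J} A_j. Then the quotient graph of G (where classes J, K are adjacent iff some j∈J is adjacent in G to some k∈K) is a negative dependency graph for the events {B_J}. -/
open MeasureTheory Finset

/-! Conditioning on `C = ⋂_{K ∈ 𝒦} B_Kᶜ` is conditioning on `⋂_{c j ∈ 𝒦} A_jᶜ`, whose indices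
are non-neighbours of every `i` in class `J`. Since the `A_i` with `c i = J` are disjoint,
`μ (B_J ∩ C) ≤ ∑ μ (A_i ∩ C) ≤ ∑ μ (A_i) μ C = μ (B_J) μ C`. -/

theorem measure_biUnion_inter_le_mul_of_pairwiseDisjoint {ι Ω : Type*} [MeasurableSpace Ω]
    (μ : Measure Ω) {s : Set ι} (hs : s.Countable) {A : ι → Set Ω} (C : Set Ω)
    (hdisj : s.PairwiseDisjoint A) (hA : ∀ i ∈ s, MeasurableSet (A i))
    (hle : ∀ i ∈ s, μ (A i ∩ C) ≤ μ (A i) * μ C) :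
    μ ((⋃ i ∈ s, A i) ∩ C) ≤ μ (⋃ i ∈ s, A i) * μ C :=
  calc μ ((⋃ i ∈ s, A i) ∩ C) = μ (⋃ i ∈ s, A i ∩ C) := by rw [Set.iUnion₂_inter]
    _ ≤ ∑' i : s, μ (A i ∩ C) := measure_biUnion_le μ hs _
    _ ≤ ∑' i : s, μ (A i) * μ C := ENNReal.tsum_le_tsum fun i => hle i i.2
    _ = μ (⋃ i ∈ s, A i) * μ C := by
      rw [ENNReal.tsum_mul_right, measure_biUnion hs hdisj hA]

theorem quotient_negative_dependency_general
    {Ω : Type*} [MeasurableSpace Ω] (μ : Measure Ω)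
    {n : ℕ} (A : Fin n → Set Ω) (hA : ∀ i, MeasurableSet (A i))
    (G : SimpleGraph (Fin n))
    (hneg : ∀ (i : Fin n) (S : Finset (Fin n)),
      (∀ j ∈ S, j ≠ i ∧ ¬ G.Adj i j) →
      0 < μ (⋂ j ∈ S, (A j)ᶜ) →
      μ (A i ∩ ⋂ j ∈ S, (A j)ᶜ) ≤ μ (A i) * μ (⋂ j ∈ S, (A j)ᶜ))
    {κ : Type*} (c : Fin n → κ)  -- the partition: `c i` is the class of `i`
    (hclass : ∀ i j, i ≠ j → c i = c j → A i ∩ A j = ∅) :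
    -- the quotient graph (classes `J ≠ K` adjacent iff some `i ∈ J`, `j ∈ K` are
    -- adjacent in `G`) is a negative dependency graph for `B J = ⋃_{c j = J} A j`:
    ∀ (J : κ) (𝒦 : Finset κ),
      (∀ K ∈ 𝒦, K ≠ J ∧ ¬ ∃ i j, c i = J ∧ c j = K ∧ G.Adj i j) →
      0 < μ (⋂ K ∈ 𝒦, (⋃ j ∈ {j | c j = K}, A j)ᶜ) →
      μ ((⋃ j ∈ {j | c j = J}, A j) ∩ ⋂ K ∈ 𝒦, (⋃ j ∈ {j | c j = K}, A j)ᶜ)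
        ≤ μ (⋃ j ∈ {j | c j = J}, A j) * μ (⋂ K ∈ 𝒦, (⋃ j ∈ {j | c j = K}, A j)ᶜ) := by
  intro J 𝒦 h𝒦 hpos
  classical
  set S : Finset (Fin n) := univ.filter fun j => c j ∈ 𝒦
  have hC : ⋂ K ∈ 𝒦, (⋃ j ∈ {j | c j = K}, A j)ᶜ = ⋂ j ∈ S, (A j)ᶜ := by
    ext x
    simp only [S, Set.mem_iInter, Set.mem_compl_iff, Set.mem_iUnion, Set.mem_ofPred_eq,
      mem_filter, mem_univ, true_and, not_exists]
    exact ⟨fun h j hj => h _ hj j rfl, fun h K hK j hj => h j (hj ▸ hK)⟩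
  have hS : ∀ i, c i = J → ∀ j ∈ S, j ≠ i ∧ ¬ G.Adj i j := by
    intro i hi j hj
    obtain ⟨hne, hnadj⟩ := h𝒦 (c j) (mem_filter.1 hj).2
    exact ⟨fun h => hne (h ▸ hi), fun hadj => hnadj ⟨i, j, hi, rfl, hadj⟩⟩
  rw [hC] at hpos ⊢
  refine measure_biUnion_inter_le_mul_of_pairwiseDisjoint μ (Set.to_countable _) _
    ?_ (fun i _ => hA i) fun i hi => hneg i S (hS i hi) hpos
  exact fun i hi j hj hij =>
    Set.disjoint_iff_inter_eq_empty.2 (hclass i j hij (hi.trans hj.symm))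

/-- Quotient of a negative dependency graph along a partition into classes of
pairwise disjoint events is a negative dependency graph for the unions `B J`. -/
theorem quotient_negative_dependency
    {Ω : Type*} [MeasurableSpace Ω] (μ : Measure Ω) [IsProbabilityMeasure μ]
    {n : ℕ} (A : Fin n → Set Ω) (hA : ∀ i, MeasurableSet (A i))
    (G : SimpleGraph (Fin n))
    (hneg : ∀ (i : Fin n) (S : Finset (Fin n)),
      (∀ j ∈ S, j ≠ i ∧ ¬ G.Adj i j) →
      0 < μ (⋂ j ∈ S, (A j)ᶜ) →
      μ (A i ∩ ⋂ j ∈ S, (A j)ᶜ) ≤ μ (A i) * μ (⋂ j ∈ S, (A j)ᶜ))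
    {κ : Type*} (c : Fin n → κ)  -- the partition: `c i` is the class of `i`
    (hclass : ∀ i j, i ≠ j → c i = c j → A i ∩ A j = ∅) :
    -- the quotient graph (classes `J ≠ K` adjacent iff some `i ∈ J`, `j ∈ K` are
    -- adjacent in `G`) is a negative dependency graph for `B J = ⋃_{c j = J} A j`:
    ∀ (J : κ) (𝒦 : Finset κ),
      (∀ K ∈ 𝒦, K ≠ J ∧ ¬ ∃ i j, c i = J ∧ c j = K ∧ G.Adj i j) →
      0 < μ (⋂ K ∈ 𝒦, (⋃ j ∈ {j | c j = K}, A j)ᶜ) →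
      μ ((⋃ j ∈ {j | c j = J}, A j) ∩ ⋂ K ∈ 𝒦, (⋃ j ∈ {j | c j = K}, A j)ᶜ)
        ≤ μ (⋃ j ∈ {j | c j = J}, A j) * μ (⋂ K ∈ 𝒦, (⋃ j ∈ {j | c j = K}, A j)ᶜ) :=
  quotient_negative_dependency_general μ A hA G hneg c hclass
end

section
/- Let G be an ε-near-positive dependency graph for events A_1,...,A_n, and suppose [n] is partitioned into classes such that any two events in the same class have empty intersection, and the quotient graph with respect to this partition has no edges. For each class J define B_J = ∨_{j∈J} A_j. Then the edgeless quotient graph is an ε-near-positive dependency graph for the events {B_J}. -/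
/-!
Because the quotient graph is edgeless, every member of the class `J` is non-adjacent in `G` to
every member of the classes in `𝒯`, and the complement of the union of those classes is the
intersection of the `(A k)ᶜ` over their members. Each `A j` with `c j = J` therefore satisfies the
near-positive dependency inequality against that intersection, and since these `A j` are
pairwise disjoint, the inequalities add up to the one for `B J`.
-/

open MeasureTheory Finset

theorem mul_measureReal_biUnion_le_of_pairwiseDisjoint {Ω ι : Type*} [MeasurableSpace Ω]
    {μ : Measure Ω} [IsFiniteMeasure μ]
    {A : ι → Set Ω} {C : Set Ω} {S : Finset ι} {a : ℝ}
    (hA : ∀ j ∈ S, MeasurableSet (A j)) (hC : MeasurableSet C)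
    (hS : (S : Set ι).PairwiseDisjoint A)
    (h : ∀ j ∈ S, a * μ.real (A j) * μ.real C ≤ μ.real (A j ∩ C)) :
    a * μ.real (⋃ j ∈ S, A j) * μ.real C ≤ μ.real ((⋃ j ∈ S, A j) ∩ C) := by
  have hSC : (S : Set ι).PairwiseDisjoint (A · ∩ C) :=
    hS.mono_on fun _ _ => Set.inter_subset_left
  rw [measureReal_biUnion_finset hS hA, Set.iUnion₂_inter,
    measureReal_biUnion_finset hSC fun j hj => (hA j hj).inter hC, mul_sum, sum_mul]
  exact sum_le_sum h

theorem iInter_compl_biUnion_fiber {Ω ι κ : Type*} [Fintype ι] (A : ι → Set Ω) (c : ι → κ)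
    (𝒯 : Finset κ) [DecidablePred (c · ∈ 𝒯)] :
    ⋂ K ∈ 𝒯, (⋃ j ∈ {j | c j = K}, A j)ᶜ = ⋂ j ∈ univ.filter (c · ∈ 𝒯), (A j)ᶜ := by
  ext x
  simp only [Set.mem_iInter, Set.mem_compl_iff, Set.mem_iUnion, Set.mem_ofPred_eq, mem_filter,
    mem_univ, true_and, not_exists]
  exact ⟨fun h j hj => h (c j) hj j rfl, fun h K hK j hj => h j (hj ▸ hK)⟩

theorem quotient_near_positive_dependency_general
    {Ω : Type*} [MeasurableSpace Ω] (μ : Measure Ω) [IsProbabilityMeasure μ]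
    {n : ℕ} (A : Fin n → Set Ω) (hA : ∀ i, MeasurableSet (A i))
    (G : SimpleGraph (Fin n))
    (ε : ℝ)
    (hposdep : ∀ (i : Fin n) (T : Finset (Fin n)),
      (∀ j ∈ T, j ≠ i ∧ ¬ G.Adj i j) →
      0 < μ (⋂ j ∈ T, (A j)ᶜ) →
      (1 - ε) * (μ (A i)).toReal * (μ (⋂ j ∈ T, (A j)ᶜ)).toReal
        ≤ (μ (A i ∩ ⋂ j ∈ T, (A j)ᶜ)).toReal)
    {κ : Type*} (c : Fin n → κ)  -- the partition: `c i` is the class of `i`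
    (hclass : ∀ i j, i ≠ j → c i = c j → A i ∩ A j = ∅)
    (hquot : ∀ i j, G.Adj i j → c i = c j)  -- the quotient graph has no edges
    :
    ∀ (J : κ) (𝒯 : Finset κ), J ∉ 𝒯 →
      0 < μ (⋂ K ∈ 𝒯, (⋃ j ∈ {j | c j = K}, A j)ᶜ) →
      (1 - ε) * (μ (⋃ j ∈ {j | c j = J}, A j)).toReal
          * (μ (⋂ K ∈ 𝒯, (⋃ j ∈ {j | c j = K}, A j)ᶜ)).toReal
        ≤ (μ ((⋃ j ∈ {j | c j = J}, A j) ∩ ⋂ K ∈ 𝒯, (⋃ j ∈ {j | c j = K}, A j)ᶜ)).toReal := by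
  classical
  intro J 𝒯 hJ hpos
  set T := univ.filter (c · ∈ 𝒯)
  have hclassJ : ⋃ j ∈ {j | c j = J}, A j = ⋃ j ∈ univ.filter (c · = J), A j := by
    ext; simp
  rw [iInter_compl_biUnion_fiber] at hpos ⊢
  rw [hclassJ]
  refine mul_measureReal_biUnion_le_of_pairwiseDisjoint (fun j _ => hA j)
    (T.measurableSet_biInter fun j _ => (hA j).compl) ?_ fun j hj => hposdep j T ?_ hpos
  · intro i hi j hj hij
    simp only [coe_filter, mem_univ, true_and, Set.mem_ofPred_eq] at hi hj
    exact Set.disjoint_iff_inter_eq_empty.mpr (hclass i j hij (hi.trans hj.symm))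
  · intro k hk
    have hck : c k ≠ c j := fun h => hJ ((mem_filter.1 hj).2 ▸ h ▸ (mem_filter.1 hk).2)
    exact ⟨fun h => hck (h ▸ rfl), fun h => hck (hquot j k h).symm⟩

/-- If `G` is an `ε`-near-positive dependency graph for `A 1, ..., A n`, the
classes of a partition consist of pairwise disjoint events, and the quotient
graph is edgeless, then the (edgeless) quotient graph is an `ε`-near-positive
dependency graph for the unions `B J = ⋃_{c j = J} A j`. -/
theorem quotient_near_positive_dependency
    {Ω : Type*} [MeasurableSpace Ω] (μ : Measure Ω) [IsProbabilityMeasure μ]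
    {n : ℕ} (A : Fin n → Set Ω) (hA : ∀ i, MeasurableSet (A i))
    (G : SimpleGraph (Fin n))
    (ε : ℝ) (hε0 : 0 < ε) (hε1 : ε < 1)
    (hdisj : ∀ i j, G.Adj i j → μ (A i ∩ A j) = 0)
    (hposdep : ∀ (i : Fin n) (T : Finset (Fin n)),
      (∀ j ∈ T, j ≠ i ∧ ¬ G.Adj i j) →
      0 < μ (⋂ j ∈ T, (A j)ᶜ) →
      (1 - ε) * (μ (A i)).toReal * (μ (⋂ j ∈ T, (A j)ᶜ)).toReal
        ≤ (μ (A i ∩ ⋂ j ∈ T, (A j)ᶜ)).toReal)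
    {κ : Type*} (c : Fin n → κ)  -- the partition: `c i` is the class of `i`
    (hclass : ∀ i j, i ≠ j → c i = c j → A i ∩ A j = ∅)
    (hquot : ∀ i j, G.Adj i j → c i = c j)  -- the quotient graph has no edges
    :
    ∀ (J : κ) (𝒯 : Finset κ), J ∉ 𝒯 →
      0 < μ (⋂ K ∈ 𝒯, (⋃ j ∈ {j | c j = K}, A j)ᶜ) →
      (1 - ε) * (μ (⋃ j ∈ {j | c j = J}, A j)).toReal
          * (μ (⋂ K ∈ 𝒯, (⋃ j ∈ {j | c j = K}, A j)ᶜ)).toReal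
        ≤ (μ ((⋃ j ∈ {j | c j = J}, A j) ∩ ⋂ K ∈ 𝒯, (⋃ j ∈ {j | c j = K}, A j)ᶜ)).toReal :=
  quotient_near_positive_dependency_general μ A hA G ε hposdep c hclass hquot
end

section
/- Let Ω_N denote the uniform probability space of perfect matchings of the complete graph K_N (N even). For a partial matching M of K_N, let A_M^N be the event that the random perfect matching contains M. Then for any collection 𝓜 of partial matchings of K_N (viewed inside K_{N+2} via the canonical embedding of vertex sets), Pr(∧_{M∈𝓜} ¬A_M^N) ≤ Pr(∧_{M∈𝓜} ¬A_M^{N+2}). -/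
/-- A perfect matching of `K_N`, modeled as a fixed-point-free involution of `Fin N`. -/
def IsPM {N : ℕ} (f : Equiv.Perm (Fin N)) : Prop :=
  ∀ x, f x ≠ x ∧ f (f x) = x

/-- A partial matching of `K_N`: a finite set of edges (ordered pairs with distinct
endpoints) which are pairwise vertex-disjoint. -/
def IsPartialMatching {N : ℕ} (M : Finset (Fin N × Fin N)) : Prop :=
  (∀ p ∈ M, p.1 ≠ p.2) ∧
  ∀ p ∈ M, ∀ q ∈ M, p ≠ q → p.1 ≠ q.1 ∧ p.1 ≠ q.2 ∧ p.2 ≠ q.1 ∧ p.2 ≠ q.2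

/-- The perfect matching `f` extends the partial matching `M`. -/
def Extends {N : ℕ} (f : Equiv.Perm (Fin N)) (M : Finset (Fin N × Fin N)) : Prop :=
  ∀ p ∈ M, f p.1 = p.2

/-- The canonical embedding of edges of `K_N` into `K_{N+2}`. -/
def embedEdge {N : ℕ} (p : Fin N × Fin N) : Fin (N + 2) × Fin (N + 2) :=
  (p.1.castLE (Nat.le_add_right N 2), p.2.castLE (Nat.le_add_right N 2))

/-!
Adjoin two vertices `a`, `b` to `K_N`. A perfect matching `f` of `K_N` and a vertex `x ≠ a` give
the perfect matching of `K_{N+2}` obtained from `f ∪ {ab}` by exchanging `b` and `x`; it matches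
`a` with `x`. Every perfect matching `g` of `K_{N+2}` arises exactly once in this way (take
`x = g a` and undo the exchange), so `K_{N+2}` has `N + 1` times as many perfect matchings as
`K_N`. The new matching agrees with `f` except that `x` and its partner are now matched to `b`
and `a`, so if it contains a matching `M` of `K_N`, then so does `f`. Hence every perfect matching
of `K_N` avoiding all `M ∈ 𝓜` yields `N + 1` perfect matchings of `K_{N+2}` avoiding them.
-/

namespace Equiv.Perm

variable {α : Type*}

def IsPerfectMatching (f : Perm α) : Prop :=
  ∀ x, f x ≠ x ∧ f (f x) = x

theorem IsPerfectMatching.conj {f : Perm α} (hf : f.IsPerfectMatching) (σ : Perm α) :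
    (σ * f * σ⁻¹).IsPerfectMatching := fun x => by
  refine ⟨fun h => (hf (σ⁻¹ x)).1 (inv_eq_iff_eq (f := σ) |>.2 h.symm).symm, ?_⟩
  simp [(hf _).2]

end Equiv.Perm

open Equiv Equiv.Perm

section TwoPointExtension

variable {α β : Type*}

structure IsTwoPointExtension (e : α ↪ β) (a b : β) : Prop where
  ne : a ≠ b
  left_notMem : a ∉ Set.range e
  right_notMem : b ∉ Set.range e
  cover : ∀ x, x ∈ Set.range e ∨ x = a ∨ x = b

variable [Fintype α] [DecidableEq β]

def addEdge (e : α ↪ β) (a b : β) (f : Perm α) : Perm β :=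
  swap a b * f.viaFintypeEmbedding e

def extendMatching (e : α ↪ β) (a b : β) (f : Perm α) (x : β) : Perm β :=
  swap b x * addEdge e a b f * swap b x

namespace IsTwoPointExtension

variable {e : α ↪ β} {a b : β}

theorem addEdge_apply_emb (h : IsTwoPointExtension e a b) (f : Perm α) (y : α) :
    addEdge e a b f (e y) = e (f y) := by
  rw [addEdge, Perm.mul_apply, viaFintypeEmbedding_apply_image]
  exact swap_apply_of_ne_of_ne (fun h' => h.left_notMem ⟨_, h'⟩)
    (fun h' => h.right_notMem ⟨_, h'⟩)

theorem addEdge_apply_left (h : IsTwoPointExtension e a b) (f : Perm α) :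
    addEdge e a b f a = b := by
  rw [addEdge, Perm.mul_apply, viaFintypeEmbedding_apply_notMem_range _ _ h.left_notMem,
    swap_apply_left]

theorem addEdge_apply_right (h : IsTwoPointExtension e a b) (f : Perm α) :
    addEdge e a b f b = a := by
  rw [addEdge, Perm.mul_apply, viaFintypeEmbedding_apply_notMem_range _ _ h.right_notMem,
    swap_apply_right]

theorem isPerfectMatching_addEdge (h : IsTwoPointExtension e a b) {f : Perm α}
    (hf : f.IsPerfectMatching) : (addEdge e a b f).IsPerfectMatching := by
  intro x
  rcases h.cover x with ⟨y, rfl⟩ | rfl | rfl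
  · simp [h.addEdge_apply_emb, (hf y).1, (hf y).2]
  · simp [h.addEdge_apply_left, h.addEdge_apply_right, h.ne.symm]
  · simp [h.addEdge_apply_left, h.addEdge_apply_right, h.ne]

theorem addEdge_injective (h : IsTwoPointExtension e a b) :
    Function.Injective (addEdge e a b) := fun f f' hff' => by
  ext y
  simpa [h.addEdge_apply_emb] using congr($hff' (e y))

theorem exists_addEdge_eq (h : IsTwoPointExtension e a b) {g : Perm β}
    (hg : g.IsPerfectMatching) (hab : g a = b) :
    ∃ f : Perm α, f.IsPerfectMatching ∧ addEdge e a b f = g := by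
  have hba : g b = a := by rw [← hab, (hg a).2]
  have hrange : ∀ y, g (e y) ∈ Set.range e := fun y => by
    rcases h.cover (g (e y)) with hy | hy | hy
    · exact hy
    · refine absurd ⟨y, ?_⟩ h.right_notMem
      rw [← hab, ← hy, (hg _).2]
    · refine absurd ⟨y, ?_⟩ h.left_notMem
      rw [← hba, ← hy, (hg _).2]
  choose f hf using hrange
  have hff : Function.Involutive f := fun y => e.injective (by rw [hf, hf, (hg _).2])
  refine ⟨hff.toPerm, fun y => ⟨fun h' => (hg (e y)).1 ?_, hff y⟩, ?_⟩
  · rw [← hf]; exact congrArg e h'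
  · ext x
    rcases h.cover x with ⟨y, rfl⟩ | rfl | rfl
    · simp [h.addEdge_apply_emb, hf]
    · rw [h.addEdge_apply_left, hab]
    · rw [h.addEdge_apply_right, hba]

theorem extendMatching_apply_left (h : IsTwoPointExtension e a b) (f : Perm α) {x : β}
    (hx : x ≠ a) :
    extendMatching e a b f x a = x := by
  rw [extendMatching, Perm.mul_apply, Perm.mul_apply, swap_apply_of_ne_of_ne h.ne hx.symm,
    h.addEdge_apply_left, swap_apply_left]

theorem isPerfectMatching_extendMatching (h : IsTwoPointExtension e a b) {f : Perm α}
    (hf : f.IsPerfectMatching) (x : β) : (extendMatching e a b f x).IsPerfectMatching := by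
  simpa [extendMatching] using (h.isPerfectMatching_addEdge hf).conj (swap b x)

theorem extendMatching_injective (h : IsTwoPointExtension e a b) {f f' : Perm α} {x x' : β}
    (hx : x ≠ a) (hx' : x' ≠ a) (heq : extendMatching e a b f x = extendMatching e a b f' x') :
    x = x' ∧ f = f' := by
  obtain rfl : x = x' := by
    rw [← h.extendMatching_apply_left f hx, ← h.extendMatching_apply_left f' hx', heq]
  refine ⟨rfl, h.addEdge_injective ?_⟩
  simpa [extendMatching] using heq

theorem exists_extendMatching_eq (h : IsTwoPointExtension e a b) {g : Perm β}
    (hg : g.IsPerfectMatching) :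
    ∃ x, x ≠ a ∧ ∃ f : Perm α, f.IsPerfectMatching ∧ extendMatching e a b f x = g := by
  obtain ⟨f, hf, hfg⟩ := h.exists_addEdge_eq (by simpa using hg.conj (swap b (g a)))
    (show swap b (g a) (g (swap b (g a) a)) = b by
      rw [swap_apply_of_ne_of_ne h.ne (hg a).1.symm, swap_apply_right])
  refine ⟨g a, (hg a).1, f, hf, ?_⟩
  simp [extendMatching, hfg, mul_assoc]

theorem eq_of_extendMatching_apply_emb (h : IsTwoPointExtension e a b) {f : Perm α} {x : β}
    (hx : x ≠ a) {y z : α} (hyz : extendMatching e a b f x (e y) = e z) : f y = z := by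
  have hb : ∀ w, e w ≠ b := fun w h' => h.right_notMem ⟨w, h'⟩
  simp only [extendMatching, Perm.mul_apply] at hyz
  by_cases hxy : e y = x
  · rw [hxy, swap_apply_right, h.addEdge_apply_right,
      swap_apply_of_ne_of_ne h.ne hx.symm] at hyz
    exact absurd ⟨z, hyz.symm⟩ h.left_notMem
  rw [swap_apply_of_ne_of_ne (hb y) hxy, h.addEdge_apply_emb] at hyz
  by_cases hxfy : e (f y) = x
  · rw [hxfy, swap_apply_right] at hyz
    exact absurd hyz.symm (hb z)
  rw [swap_apply_of_ne_of_ne (hb _) hxfy] at hyz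
  exact e.injective hyz

theorem card_isPerfectMatching (h : IsTwoPointExtension e a b) :
    Nat.card {g : Perm β // g.IsPerfectMatching} =
      Nat.card {x // x ≠ a} * Nat.card {f : Perm α // f.IsPerfectMatching} := by
  rw [← Nat.card_prod]
  refine (Nat.card_eq_of_bijective (fun p => ⟨extendMatching e a b p.2 p.1,
    h.isPerfectMatching_extendMatching p.2.2 _⟩) ⟨?_, ?_⟩).symm
  · rintro ⟨⟨x, hx⟩, ⟨f, hf⟩⟩ ⟨⟨x', hx'⟩, ⟨f', hf'⟩⟩ heq
    obtain ⟨rfl, rfl⟩ := h.extendMatching_injective hx hx' (congrArg Subtype.val heq)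
    rfl
  · rintro ⟨g, hg⟩
    obtain ⟨x, hx, f, hf, rfl⟩ := h.exists_extendMatching_eq hg
    exact ⟨⟨⟨x, hx⟩, ⟨f, hf⟩⟩, rfl⟩

theorem card_mul_card_le (h : IsTwoPointExtension e a b) [Finite β] {P : Perm α → Prop}
    {Q : Perm β → Prop} (hPQ : ∀ f x, x ≠ a → P f → Q (extendMatching e a b f x)) :
    Nat.card {x // x ≠ a} * Nat.card {f : Perm α // f.IsPerfectMatching ∧ P f} ≤
      Nat.card {g : Perm β // g.IsPerfectMatching ∧ Q g} := by
  rw [← Nat.card_prod]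
  refine Nat.card_le_card_of_injective (fun p => ⟨extendMatching e a b p.2 p.1,
    h.isPerfectMatching_extendMatching p.2.2.1 _, hPQ _ _ p.1.2 p.2.2.2⟩) ?_
  rintro ⟨⟨x, hx⟩, ⟨f, hf⟩⟩ ⟨⟨x', hx'⟩, ⟨f', hf'⟩⟩ heq
  obtain ⟨rfl, rfl⟩ := h.extendMatching_injective hx hx' (congrArg Subtype.val heq)
  rfl

end IsTwoPointExtension

end TwoPointExtension

theorem isTwoPointExtension_castLEEmb (N : ℕ) :
    IsTwoPointExtension (Fin.castLEEmb (Nat.le_add_right N 2)) (Fin.last N).castSucc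
      (Fin.last (N + 1)) where
  ne := by simp [Fin.ext_iff]
  left_notMem := by rintro ⟨y, hy⟩; simp [Fin.ext_iff] at hy; omega
  right_notMem := by rintro ⟨y, hy⟩; simp [Fin.ext_iff] at hy; omega
  cover x := by
    by_cases hx : (x : ℕ) < N
    · exact Or.inl ⟨⟨x, hx⟩, rfl⟩
    · right; simp only [Fin.ext_iff, Fin.val_castSucc, Fin.val_last]; omega

theorem Extends.of_extendMatching_image_embedEdge {N : ℕ} {f : Perm (Fin N)} {x : Fin (N + 2)}
    (hx : x ≠ (Fin.last N).castSucc) {M : Finset (Fin N × Fin N)}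
    (hM : Extends (extendMatching (Fin.castLEEmb (Nat.le_add_right N 2)) (Fin.last N).castSucc
      (Fin.last (N + 1)) f x) (M.image embedEdge)) : Extends f M := fun p hp =>
  (isTwoPointExtension_castLEEmb N).eq_of_extendMatching_apply_emb hx (y := p.1)
    (hM (embedEdge p) (Finset.mem_image_of_mem _ hp))

theorem matching_monotone_avoidance_general (N : ℕ)
    (𝓜 : Finset (Finset (Fin N × Fin N))) :
    (Nat.card {f : Equiv.Perm (Fin N) // IsPM f ∧ ∀ M ∈ 𝓜, ¬ Extends f M} : ℚ) /
        Nat.card {f : Equiv.Perm (Fin N) // IsPM f}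
      ≤ (Nat.card {f : Equiv.Perm (Fin (N + 2)) //
            IsPM f ∧ ∀ M ∈ 𝓜, ¬ Extends f (M.image embedEdge)} : ℚ) /
        Nat.card {f : Equiv.Perm (Fin (N + 2)) // IsPM f} := by
  have h := isTwoPointExtension_castLEEmb N
  have hcard : Nat.card {x : Fin (N + 2) // x ≠ (Fin.last N).castSucc} = N + 1 := by simp
  have hP : Nat.card {f : Perm (Fin (N + 2)) // IsPM f} =
      (N + 1) * Nat.card {f : Perm (Fin N) // IsPM f} := by
    rw [← hcard]; exact h.card_isPerfectMatching
  have hA : (N + 1) * Nat.card {f : Perm (Fin N) // IsPM f ∧ ∀ M ∈ 𝓜, ¬ Extends f M} ≤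
      Nat.card {f : Perm (Fin (N + 2)) //
        IsPM f ∧ ∀ M ∈ 𝓜, ¬ Extends f (M.image embedEdge)} := by
    rw [← hcard]
    exact h.card_mul_card_le fun f x hx hf M hM hext =>
      hf M hM (.of_extendMatching_image_embedEdge hx hext)
  rw [hP, Nat.cast_mul, ← mul_div_mul_left _ _ (by positivity : ((N + 1 : ℕ) : ℚ) ≠ 0)]
  gcongr
  exact_mod_cast hA

/-- For any collection `𝓜` of partial matchings of `K_N` (`N` even),
`Pr(∧_{M ∈ 𝓜} ¬A_M^N) ≤ Pr(∧_{M ∈ 𝓜} ¬A_M^{N+2})`, the probabilities being over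
uniform random perfect matchings of `K_N` and of `K_{N+2}` respectively. -/
theorem matching_monotone_avoidance (N : ℕ) (hN : Even N)
    (𝓜 : Finset (Finset (Fin N × Fin N)))
    (h𝓜 : ∀ M ∈ 𝓜, IsPartialMatching M) :
    (Nat.card {f : Equiv.Perm (Fin N) // IsPM f ∧ ∀ M ∈ 𝓜, ¬ Extends f M} : ℚ) /
        Nat.card {f : Equiv.Perm (Fin N) // IsPM f}
      ≤ (Nat.card {f : Equiv.Perm (Fin (N + 2)) //
            IsPM f ∧ ∀ M ∈ 𝓜, ¬ Extends f (M.image embedEdge)} : ℚ) /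
        Nat.card {f : Equiv.Perm (Fin (N + 2)) // IsPM f} :=
  matching_monotone_avoidance_general N 𝓜
end

section
/- Let 𝓜 be a collection of partial matchings of the complete graph K_N (N even), and for each M ∈ 𝓜 let A_M be the event that a uniformly random perfect matching of K_N contains M. Define a graph G on vertex set 𝓜 where M_1 M_2 is an edge iff M_1 and M_2 are in conflict (i.e., M_1 ∪ M_2, after suppressing multiple edges, is not a matching). Then G is a negative dependency graph for the events {A_M : M ∈ 𝓜}. -/
/-- Two matchings are in conflict if their union (after suppressing multiple edges)
is not a matching: some edge of one shares a vertex with a *different* edge of the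
other. -/
def Conflict {N : ℕ} (M₁ M₂ : Finset (Fin N × Fin N)) : Prop :=
  ∃ p ∈ M₁, ∃ q ∈ M₂,
    (({p.1, p.2} : Finset (Fin N)) ∩ {q.1, q.2}).Nonempty ∧
    ({p.1, p.2} : Finset (Fin N)) ≠ {q.1, q.2}

open Finset Equiv

namespace NegDep

attribute [local instance] Classical.propDecidable

variable {N : ℕ}

lemma pm_subset {F F' : Finset (Fin N × Fin N)} (h : F ⊆ F') (hF' : IsPartialMatching F') :
    IsPartialMatching F :=
  ⟨fun p hp => hF'.1 p (h hp), fun p hp q hq hpq => hF'.2 p (h hp) q (h hq) hpq⟩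

lemma pair_eq {x y u v : Fin N} (hxy : x ≠ y) (h : ({x, y} : Finset (Fin N)) = {u, v}) :
    (x = u ∧ y = v) ∨ (x = v ∧ y = u) := by
  have hx : x = u ∨ x = v := by
    have : x ∈ ({u, v} : Finset (Fin N)) := by rw [← h]; simp
    simpa using this
  have hy : y = u ∨ y = v := by
    have : y ∈ ({u, v} : Finset (Fin N)) := by rw [← h]; simp
    simpa using this
  rcases hx with hx | hx <;> rcases hy with hy | hy
  · exact absurd (hx.trans hy.symm) hxy
  · exact Or.inl ⟨hx, hy⟩
  · exact Or.inr ⟨hx, hy⟩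
  · exact absurd (hx.trans hy.symm) hxy

lemma extends_insert {σ : Equiv.Perm (Fin N)} {p : Fin N × Fin N} {F : Finset (Fin N × Fin N)} :
    Extends σ (insert p F) ↔ σ p.1 = p.2 ∧ Extends σ F := by
  simp [Extends, Finset.forall_mem_insert]

lemma conj_apply (g σ : Equiv.Perm (Fin N)) (x : Fin N) : (g * σ * g) x = g (σ (g x)) := rfl

lemma conj_pm {g σ : Equiv.Perm (Fin N)} (hg : ∀ x, g (g x) = x) (hσ : IsPM σ) :
    IsPM (g * σ * g) := by
  intro x
  constructor
  · intro h
    rw [conj_apply] at h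
    have h1 : g (g (σ (g x))) = g x := by rw [h]
    rw [hg] at h1
    exact (hσ (g x)).1 h1
  · show (g * σ * g) ((g * σ * g) x) = x
    rw [conj_apply, conj_apply, hg, (hσ (g x)).2, hg]

lemma conj_extends {g σ : Equiv.Perm (Fin N)} {F₀ : Finset (Fin N × Fin N)}
    (hgF : ∀ q ∈ F₀, g q.1 = q.1 ∧ g q.2 = q.2) (hσ : Extends σ F₀) :
    Extends (g * σ * g) F₀ := by
  intro q hq
  rw [conj_apply, (hgF q hq).1, hσ q hq, (hgF q hq).2]


lemma exists_extends : ∀ (F : Finset (Fin N × Fin N)), IsPartialMatching F →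
    ∃ σ : Equiv.Perm (Fin N), (∀ p ∈ F, σ p.1 = p.2 ∧ σ p.2 = p.1) ∧
      ∀ x, (∀ p ∈ F, x ≠ p.1 ∧ x ≠ p.2) → σ x = x := by
  intro F
  induction F using Finset.induction_on with
  | empty => intro _; exact ⟨1, by simp, fun x _ => rfl⟩
  | @insert p F hpF ih =>
    intro hF
    obtain ⟨σ, hσ1, hσ2⟩ := ih (pm_subset (subset_insert _ _) hF)
    have hp12 : p.1 ≠ p.2 := hF.1 p (mem_insert_self _ _)
    have hdisj : ∀ q ∈ F, p.1 ≠ q.1 ∧ p.1 ≠ q.2 ∧ p.2 ≠ q.1 ∧ p.2 ≠ q.2 := fun q hq =>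
      hF.2 p (mem_insert_self _ _) q (mem_insert_of_mem hq) (by rintro rfl; exact hpF hq)
    refine ⟨Equiv.swap p.1 p.2 * σ, ?_, ?_⟩
    · intro q hq
      rcases mem_insert.mp hq with hq | hq
      · subst hq
        have h1 : σ q.1 = q.1 := hσ2 _ (fun r hr => ⟨(hdisj r hr).1, (hdisj r hr).2.1⟩)
        have h2 : σ q.2 = q.2 := hσ2 _ (fun r hr => ⟨(hdisj r hr).2.2.1, (hdisj r hr).2.2.2⟩)
        constructor
        · rw [Equiv.Perm.mul_apply, h1, Equiv.swap_apply_left]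
        · rw [Equiv.Perm.mul_apply, h2, Equiv.swap_apply_right]
      · have hq1 : σ q.1 = q.2 := (hσ1 q hq).1
        have hq2 : σ q.2 = q.1 := (hσ1 q hq).2
        have d := hdisj q hq
        constructor
        · rw [Equiv.Perm.mul_apply, hq1, Equiv.swap_apply_of_ne_of_ne (Ne.symm d.2.1) (Ne.symm d.2.2.2)]
        · rw [Equiv.Perm.mul_apply, hq2, Equiv.swap_apply_of_ne_of_ne (Ne.symm d.1) (Ne.symm d.2.2.1)]
    · intro x hx
      have h1 : σ x = x := hσ2 x (fun q hq => hx q (mem_insert_of_mem hq))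
      have hxp := hx p (mem_insert_self _ _)
      rw [Equiv.Perm.mul_apply, h1, Equiv.swap_apply_of_ne_of_ne hxp.1 hxp.2]

lemma exists_pairing : ∀ (k : ℕ) (T : Finset (Fin N)), T.card = k + k →
    ∃ σ : Equiv.Perm (Fin N), (∀ x ∈ T, σ x ≠ x) ∧ (∀ x ∉ T, σ x = x) ∧ ∀ x, σ (σ x) = x := by
  intro k
  induction k with
  | zero =>
    intro T hT
    have hT0 : T = ∅ := card_eq_zero.mp hT
    subst hT0
    exact ⟨1, by simp, fun x _ => rfl, fun x => rfl⟩
  | succ k ih =>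
    intro T hT
    have h1 : T.Nonempty := by rw [← card_pos, hT]; omega
    obtain ⟨x, hx⟩ := h1
    have h2 : (T.erase x).Nonempty := by
      rw [← card_pos, card_erase_of_mem hx, hT]; omega
    obtain ⟨y, hy⟩ := h2
    have hyx : y ≠ x := ne_of_mem_erase hy
    have hyT : y ∈ T := mem_of_mem_erase hy
    obtain ⟨σ, hσ1, hσ2, hσ3⟩ := ih ((T.erase x).erase y)
      (by rw [card_erase_of_mem hy, card_erase_of_mem hx, hT]; omega)
    have hclosed : ∀ w ∈ (T.erase x).erase y, σ w ∈ (T.erase x).erase y := by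
      intro w hw
      by_contra h
      exact hσ1 w hw (((hσ3 w).symm.trans (hσ2 _ h)).symm)
    have hxT' : x ∉ (T.erase x).erase y := by simp
    have hyT' : y ∉ (T.erase x).erase y := by simp
    refine ⟨Equiv.swap x y * σ, ?_, ?_, ?_⟩
    · intro z hz
      by_cases hzx : z = x
      · subst hzx
        rw [Equiv.Perm.mul_apply, hσ2 z hxT', Equiv.swap_apply_left]
        exact hyx
      by_cases hzy : z = y
      · subst hzy
        rw [Equiv.Perm.mul_apply, hσ2 z hyT', Equiv.swap_apply_right]
        exact fun h => hyx h.symm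
      · have hzT' : z ∈ (T.erase x).erase y := by
          exact mem_erase.mpr ⟨hzy, mem_erase.mpr ⟨hzx, hz⟩⟩
        have h1 := hclosed z hzT'
        rw [Equiv.Perm.mul_apply,
          Equiv.swap_apply_of_ne_of_ne (ne_of_mem_of_not_mem h1 hxT') (ne_of_mem_of_not_mem h1 hyT')]
        exact hσ1 z hzT'
    · intro z hz
      have hzx : z ≠ x := fun h => hz (h ▸ hx)
      have hzy : z ≠ y := fun h => hz (h ▸ hyT)
      have hzT' : z ∉ (T.erase x).erase y := fun h => hz (mem_of_mem_erase (mem_of_mem_erase h))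
      rw [Equiv.Perm.mul_apply, hσ2 z hzT', Equiv.swap_apply_of_ne_of_ne hzx hzy]
    · intro z
      by_cases hzT' : z ∈ (T.erase x).erase y
      · have h1 := hclosed z hzT'
        rw [Equiv.Perm.mul_apply, Equiv.Perm.mul_apply,
          Equiv.swap_apply_of_ne_of_ne (ne_of_mem_of_not_mem h1 hxT') (ne_of_mem_of_not_mem h1 hyT'),
          hσ3 z,
          Equiv.swap_apply_of_ne_of_ne (ne_of_mem_of_not_mem hzT' hxT') (ne_of_mem_of_not_mem hzT' hyT')]
      · have h2 : σ z = z := hσ2 z hzT'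
        by_cases hzx : z = x
        · subst hzx
          rw [Equiv.Perm.mul_apply, Equiv.Perm.mul_apply, h2, Equiv.swap_apply_left,
            hσ2 y hyT', Equiv.swap_apply_right]
        by_cases hzy : z = y
        · subst hzy
          rw [Equiv.Perm.mul_apply, Equiv.Perm.mul_apply, h2, Equiv.swap_apply_right,
            hσ2 x hxT', Equiv.swap_apply_left]
        · rw [Equiv.Perm.mul_apply, Equiv.Perm.mul_apply, h2,
            Equiv.swap_apply_of_ne_of_ne hzx hzy, h2, Equiv.swap_apply_of_ne_of_ne hzx hzy]

lemma exists_pm_extends (hN : Even N) (F : Finset (Fin N × Fin N)) (hF : IsPartialMatching F) :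
    ∃ σ : Equiv.Perm (Fin N), IsPM σ ∧ Extends σ F := by
  obtain ⟨σF, hσF1, hσF2⟩ := exists_extends F hF
  set T : Finset (Fin N) := univ.filter (fun x => ∀ p ∈ F, x ≠ p.1 ∧ x ≠ p.2) with hTdef
  have hTc : T = (F.biUnion fun p => ({p.1, p.2} : Finset (Fin N)))ᶜ := by
    ext z
    simp only [hTdef, mem_filter, mem_univ, true_and, mem_compl, mem_biUnion, mem_insert,
      mem_singleton]
    push_neg
    exact ⟨fun h => h, fun h => h⟩
  have hbU : (F.biUnion fun p => ({p.1, p.2} : Finset (Fin N))).card = 2 * F.card := by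
    rw [card_biUnion]
    · rw [Finset.sum_congr rfl (fun p hp => ?_), Finset.sum_const, smul_eq_mul, mul_comm]
      rw [card_insert_of_notMem (by simp [hF.1 p hp]), card_singleton]
    · intro p hp q hq hpq
      have h := hF.2 p hp q hq hpq
      simp only [disjoint_left, mem_insert, mem_singleton]
      rintro z (rfl | rfl) <;> rintro (h' | h')
      · exact h.1 h'
      · exact h.2.1 h'
      · exact h.2.2.1 h'
      · exact h.2.2.2 h'
  have hTcard : Even T.card := by
    rw [hTc, card_compl, hbU, Fintype.card_fin]
    rcases le_or_gt (2 * F.card) N with h | h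
    · rw [Nat.even_sub h]
      simp [hN, Nat.even_iff, Nat.mul_mod_right]
    · rw [Nat.sub_eq_zero_of_le h.le]
      exact Even.zero
  obtain ⟨k, hk⟩ := hTcard
  obtain ⟨σT, h1, h2, h3⟩ := exists_pairing k T (by omega)
  have hclT : ∀ w ∈ T, σT w ∈ T := by
    intro w hw
    by_contra h
    exact h1 w hw (((h3 w).symm.trans (h2 _ h)).symm)
  have hmemT : ∀ z : Fin N, z ∈ T ↔ ∀ p ∈ F, z ≠ p.1 ∧ z ≠ p.2 := by
    intro z; simp [hTdef]
  have hnotT : ∀ z : Fin N, z ∉ T → ∃ p ∈ F, z = p.1 ∨ z = p.2 := by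
    intro z hz
    by_contra h
    push_neg at h
    exact hz ((hmemT z).mpr (fun p hp => ⟨(h p hp).1, (h p hp).2⟩))
  refine ⟨σF * σT, ?_, ?_⟩
  · intro z
    by_cases hz : z ∈ T
    · have hz2 := (hmemT z).mp hz
      have hmz : σT z ∈ T := hclT z hz
      have hσFz : σF (σT z) = σT z := hσF2 _ ((hmemT _).mp hmz)
      constructor
      · rw [Equiv.Perm.mul_apply, hσFz]
        exact h1 z hz
      · rw [Equiv.Perm.mul_apply, Equiv.Perm.mul_apply, hσFz, h3 z, hσF2 z hz2]
    · obtain ⟨p, hp, hzp⟩ := hnotT z hz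
      have hσTz : σT z = z := h2 z hz
      have hp2T : p.2 ∉ T := fun h => ((hmemT p.2).mp h p hp).2 rfl
      have hp1T : p.1 ∉ T := fun h => ((hmemT p.1).mp h p hp).1 rfl
      rcases hzp with rfl | rfl
      · constructor
        · rw [Equiv.Perm.mul_apply, hσTz, (hσF1 p hp).1]
          exact Ne.symm (hF.1 p hp)
        · rw [Equiv.Perm.mul_apply, Equiv.Perm.mul_apply, hσTz, (hσF1 p hp).1,
            h2 _ hp2T, (hσF1 p hp).2]
      · constructor
        · rw [Equiv.Perm.mul_apply, hσTz, (hσF1 p hp).2]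
          exact hF.1 p hp
        · rw [Equiv.Perm.mul_apply, Equiv.Perm.mul_apply, hσTz, (hσF1 p hp).2,
            h2 _ hp1T, (hσF1 p hp).1]
  · intro p hp
    have hp1T : p.1 ∉ T := fun h => ((hmemT p.1).mp h p hp).1 rfl
    rw [Equiv.Perm.mul_apply, h2 _ hp1T, (hσF1 p hp).1]

lemma filter_pm_pos (hN : Even N) (F : Finset (Fin N × Fin N)) (hF : IsPartialMatching F) :
    0 < (univ.filter (fun σ : Equiv.Perm (Fin N) => IsPM σ ∧ Extends σ F)).card := by
  obtain ⟨σ, h1, h2⟩ := exists_pm_extends hN F hF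
  exact card_pos.mpr ⟨σ, mem_filter.mpr ⟨mem_univ _, h1, h2⟩⟩


/-- fiber counts without the avoidance condition -/
noncomputable def nn (F₀ : Finset (Fin N × Fin N)) (a c : Fin N) : ℕ :=
  (univ.filter (fun σ : Equiv.Perm (Fin N) => (IsPM σ ∧ Extends σ F₀) ∧ σ a = c)).card

/-- fiber counts with the avoidance condition -/
noncomputable def mm (S : Finset (Finset (Fin N × Fin N))) (F₀ : Finset (Fin N × Fin N))
    (a c : Fin N) : ℕ :=
  (univ.filter (fun σ : Equiv.Perm (Fin N) =>
    ((IsPM σ ∧ Extends σ F₀) ∧ ∀ M ∈ S, ¬ Extends σ M) ∧ σ a = c)).card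

lemma step (F : Finset (Fin N × Fin N)) (hF : IsPartialMatching F)
    (S : Finset (Finset (Fin N × Fin N)))
    (hS : ∀ M ∈ S, ¬ Conflict F M)
    (hSm : ∀ M ∈ S, ∀ q ∈ M, q.1 ≠ q.2)
    (F₀ : Finset (Fin N × Fin N)) (hF₀F : F₀ ⊆ F)
    (e : Fin N × Fin N) (heF : e ∈ F) (heF₀ : e ∉ F₀) :
    (univ.filter (fun σ : Equiv.Perm (Fin N) =>
        IsPM σ ∧ Extends σ (insert e F₀) ∧ ∀ M ∈ S, ¬ Extends σ M)).card *
      (univ.filter (fun σ : Equiv.Perm (Fin N) => IsPM σ ∧ Extends σ F₀)).card ≤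
    (univ.filter (fun σ : Equiv.Perm (Fin N) =>
        IsPM σ ∧ Extends σ F₀ ∧ ∀ M ∈ S, ¬ Extends σ M)).card *
      (univ.filter (fun σ : Equiv.Perm (Fin N) => IsPM σ ∧ Extends σ (insert e F₀))).card := by
  obtain ⟨a, b⟩ := e
  have hab : a ≠ b := hF.1 _ heF
  have hvF₀ : ∀ q ∈ F₀, a ≠ q.1 ∧ a ≠ q.2 ∧ b ≠ q.1 ∧ b ≠ q.2 := by
    intro q hq
    exact hF.2 (a, b) heF q (hF₀F hq) (fun h => heF₀ (h ▸ hq))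
  -- rewrite the four cardinalities in terms of `nn`/`mm`
  have e1 : (univ.filter (fun σ : Equiv.Perm (Fin N) =>
      IsPM σ ∧ Extends σ (insert (a, b) F₀) ∧ ∀ M ∈ S, ¬ Extends σ M)).card = mm S F₀ a b := by
    rw [mm]
    congr 1
    apply filter_congr
    intro σ _
    rw [extends_insert]
    constructor
    · rintro ⟨h1, ⟨h2, h3⟩, h4⟩; exact ⟨⟨⟨h1, h3⟩, h4⟩, h2⟩
    · rintro ⟨⟨⟨h1, h3⟩, h4⟩, h2⟩; exact ⟨h1, ⟨h2, h3⟩, h4⟩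
  have e2 : (univ.filter (fun σ : Equiv.Perm (Fin N) =>
      IsPM σ ∧ Extends σ (insert (a, b) F₀))).card = nn F₀ a b := by
    rw [nn]
    congr 1
    apply filter_congr
    intro σ _
    rw [extends_insert]
    constructor
    · rintro ⟨h1, h2, h3⟩; exact ⟨⟨h1, h3⟩, h2⟩
    · rintro ⟨⟨h1, h3⟩, h2⟩; exact ⟨h1, h2, h3⟩
  have e3 : (univ.filter (fun σ : Equiv.Perm (Fin N) => IsPM σ ∧ Extends σ F₀)).card
      = ∑ c, nn F₀ a c := by
    rw [Finset.card_eq_sum_card_fiberwise (f := fun σ : Equiv.Perm (Fin N) => σ a)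
      (t := univ) (fun σ _ => mem_univ _)]
    refine Finset.sum_congr rfl (fun c _ => ?_)
    rw [nn, filter_filter]
  have e4 : (univ.filter (fun σ : Equiv.Perm (Fin N) =>
      IsPM σ ∧ Extends σ F₀ ∧ ∀ M ∈ S, ¬ Extends σ M)).card = ∑ c, mm S F₀ a c := by
    have hre : (univ.filter (fun σ : Equiv.Perm (Fin N) =>
        IsPM σ ∧ Extends σ F₀ ∧ ∀ M ∈ S, ¬ Extends σ M))
        = univ.filter (fun σ : Equiv.Perm (Fin N) =>
          (IsPM σ ∧ Extends σ F₀) ∧ ∀ M ∈ S, ¬ Extends σ M) := by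
      apply filter_congr
      intro σ _
      tauto
    rw [hre, Finset.card_eq_sum_card_fiberwise (f := fun σ : Equiv.Perm (Fin N) => σ a)
      (t := univ) (fun σ _ => mem_univ _)]
    refine Finset.sum_congr rfl (fun c _ => ?_)
    rw [mm, filter_filter]
  rw [e1, e2, e3, e4]
  -- key inequality per fiber
  have key : ∀ c, mm S F₀ a b * nn F₀ a c ≤ mm S F₀ a c * nn F₀ a b := by
    intro c
    by_cases hcb : c = b
    · subst hcb; exact le_rfl
    by_cases hca : c = a
    · have : nn F₀ a c = 0 := by
        rw [nn, card_eq_zero, filter_eq_empty_iff]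
        rintro σ _ ⟨⟨hpm, _⟩, h⟩
        rw [hca] at h
        exact (hpm a).1 h
      rw [this, Nat.mul_zero]
      exact Nat.zero_le _
    by_cases hcF₀ : ∃ q ∈ F₀, c = q.1 ∨ c = q.2
    · have : nn F₀ a c = 0 := by
        rw [nn, card_eq_zero, filter_eq_empty_iff]
        rintro σ _ ⟨⟨hpm, hext⟩, hac⟩
        obtain ⟨q, hq, hc⟩ := hcF₀
        rcases hc with rfl | rfl
        · have h1 : σ (σ a) = a := (hpm a).2
          rw [hac, hext q hq] at h1
          exact (hvF₀ q hq).2.1 h1.symm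
        · have h1 : σ q.1 = σ a := by rw [hext q hq, hac]
          exact (hvF₀ q hq).1 (σ.injective h1).symm
      rw [this, Nat.mul_zero]
      exact Nat.zero_le _
    · -- main case
      push_neg at hcF₀
      have hac : a ≠ c := fun h => hca h.symm
      have hbc : b ≠ c := fun h => hcb h.symm
      set g : Equiv.Perm (Fin N) := Equiv.swap b c with hgdef
      have hgg : ∀ x, g (g x) = x := fun x => Equiv.swap_apply_self b c x
      have hga : g a = a := Equiv.swap_apply_of_ne_of_ne hab hac
      have hgb : g b = c := Equiv.swap_apply_left b c
      have hgc : g c = b := Equiv.swap_apply_right b c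
      have hgF₀ : ∀ q ∈ F₀, g q.1 = q.1 ∧ g q.2 = q.2 := by
        intro q hq
        refine ⟨Equiv.swap_apply_of_ne_of_ne (Ne.symm (hvF₀ q hq).2.2.1) ?_,
          Equiv.swap_apply_of_ne_of_ne (Ne.symm (hvF₀ q hq).2.2.2) ?_⟩
        · exact fun h => (hcF₀ q hq).1 h.symm
        · exact fun h => (hcF₀ q hq).2 h.symm
      have hinj : ∀ σ τ : Equiv.Perm (Fin N), g * σ * g = g * τ * g → σ = τ := by
        intro σ τ h
        exact mul_left_cancel (mul_right_cancel h)
      -- B-preservation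
      have hBpres : ∀ σ : Equiv.Perm (Fin N), IsPM σ → σ a = b →
          (∀ M ∈ S, ¬ Extends σ M) → ∀ M ∈ S, ¬ Extends (g * σ * g) M := by
        intro σ hpm hsab hB M hM hExt
        have hq : ∀ q ∈ M, (q.1 = a ∨ q.1 = b ∨ q.2 = a ∨ q.2 = b) →
            ((a = q.1 ∧ b = q.2) ∨ (a = q.2 ∧ b = q.1)) := by
          intro q hqM htouch
          have hset : ({a, b} : Finset (Fin N)) = {q.1, q.2} := by
            by_contra hne
            refine hS M hM ⟨(a, b), heF, q, hqM, ?_, hne⟩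
            rcases htouch with h | h | h | h
            · exact ⟨a, by simp [h]⟩
            · exact ⟨b, by simp [h]⟩
            · exact ⟨a, by simp [h]⟩
            · exact ⟨b, by simp [h]⟩
          exact pair_eq hab hset
        by_cases hcase : ∃ q ∈ M, (a = q.1 ∧ b = q.2) ∨ (a = q.2 ∧ b = q.1)
        · obtain ⟨q, hqM, hq'⟩ := hcase
          have hE := hExt q hqM
          rcases hq' with ⟨h1, h2⟩ | ⟨h1, h2⟩
          · rw [← h1, ← h2, conj_apply, hga, hsab, hgb] at hE
            exact hbc hE.symm
          · rw [← h2, ← h1, conj_apply, hgb] at hE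
            have h3 : σ c = a := by
              have := congrArg g hE
              rwa [hgg, hga] at this
            have h4 : σ a = c := by rw [← h3, (hpm c).2]
            rw [hsab] at h4
            exact hbc h4
        · have havoid : ∀ q ∈ M, q.1 ≠ a ∧ q.1 ≠ b ∧ q.2 ≠ a ∧ q.2 ≠ b := by
            intro q hqM
            refine ⟨?_, ?_, ?_, ?_⟩ <;> intro h
            · exact hcase ⟨q, hqM, hq q hqM (Or.inl h)⟩
            · exact hcase ⟨q, hqM, hq q hqM (Or.inr (Or.inl h))⟩
            · exact hcase ⟨q, hqM, hq q hqM (Or.inr (Or.inr (Or.inl h)))⟩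
            · exact hcase ⟨q, hqM, hq q hqM (Or.inr (Or.inr (Or.inr h)))⟩
          by_cases hc2 : ∃ q ∈ M, q.1 = c ∨ q.2 = c
          · obtain ⟨q, hqM, hqc⟩ := hc2
            have hE := hExt q hqM
            have hv := havoid q hqM
            rcases hqc with h | h
            · rw [h, conj_apply, hgc] at hE
              have hsb : σ b = a := by rw [← hsab, (hpm a).2]
              rw [hsb, hga] at hE
              exact hv.2.2.1 hE.symm
            · rw [conj_apply,
                Equiv.swap_apply_of_ne_of_ne hv.2.1 (fun hh => (hSm M hM q hqM) (hh.trans h.symm)),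
                h] at hE
              have h3 : σ q.1 = b := by
                have := congrArg g hE
                rwa [hgg, hgc] at this
              exact hv.1 (σ.injective (h3.trans hsab.symm))
          · apply hB M hM
            intro q hqM
            have hE := hExt q hqM
            have hv := havoid q hqM
            have hnc1 : q.1 ≠ c := fun h => hc2 ⟨q, hqM, Or.inl h⟩
            have hnc2 : q.2 ≠ c := fun h => hc2 ⟨q, hqM, Or.inr h⟩
            rw [conj_apply, Equiv.swap_apply_of_ne_of_ne hv.2.1 hnc1] at hE
            have := congrArg g hE
            rwa [hgg, Equiv.swap_apply_of_ne_of_ne hv.2.2.2 hnc2] at this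
      -- n b = n c
      have hn_eq : nn F₀ a b = nn F₀ a c := by
        apply le_antisymm
        · rw [nn, nn]
          apply Finset.card_le_card_of_injOn (fun σ => g * σ * g)
          · rintro σ hσ
            obtain ⟨-, ⟨hpm, hext⟩, hfib⟩ := mem_filter.mp hσ
            refine mem_filter.mpr ⟨mem_univ _, ⟨conj_pm hgg hpm, conj_extends hgF₀ hext⟩, ?_⟩
            rw [conj_apply, hga, hfib, hgb]
          · intro σ _ τ _ h
            exact hinj σ τ h
        · rw [nn, nn]
          apply Finset.card_le_card_of_injOn (fun σ => g * σ * g)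
          · rintro σ hσ
            obtain ⟨-, ⟨hpm, hext⟩, hfib⟩ := mem_filter.mp hσ
            refine mem_filter.mpr ⟨mem_univ _, ⟨conj_pm hgg hpm, conj_extends hgF₀ hext⟩, ?_⟩
            rw [conj_apply, hga, hfib, hgc]
          · intro σ _ τ _ h
            exact hinj σ τ h
      have hm_le : mm S F₀ a b ≤ mm S F₀ a c := by
        rw [mm, mm]
        apply Finset.card_le_card_of_injOn (fun σ => g * σ * g)
        · rintro σ hσ
          obtain ⟨-, ⟨⟨hpm, hext⟩, hBσ⟩, hfib⟩ := mem_filter.mp hσ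
          refine mem_filter.mpr ⟨mem_univ _, ⟨⟨conj_pm hgg hpm, conj_extends hgF₀ hext⟩,
            hBpres σ hpm hfib hBσ⟩, ?_⟩
          rw [conj_apply, hga, hfib, hgb]
        · intro σ _ τ _ h
          exact hinj σ τ h
      rw [← hn_eq]
      exact Nat.mul_le_mul_right _ hm_le
  calc mm S F₀ a b * ∑ c, nn F₀ a c = ∑ c, mm S F₀ a b * nn F₀ a c := Finset.mul_sum _ _ _
    _ ≤ ∑ c, mm S F₀ a c * nn F₀ a b := Finset.sum_le_sum (fun c _ => key c)
    _ = (∑ c, mm S F₀ a c) * nn F₀ a b := (Finset.sum_mul _ _ _).symm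


lemma chain (hN : Even N) (F : Finset (Fin N × Fin N)) (hF : IsPartialMatching F)
    (S : Finset (Finset (Fin N × Fin N)))
    (hS : ∀ M ∈ S, ¬ Conflict F M)
    (hSm : ∀ M ∈ S, ∀ q ∈ M, q.1 ≠ q.2) :
    ∀ (k : ℕ) (F₀ : Finset (Fin N × Fin N)), F₀ ⊆ F → (F \ F₀).card = k →
    (univ.filter (fun σ : Equiv.Perm (Fin N) =>
        IsPM σ ∧ Extends σ F ∧ ∀ M ∈ S, ¬ Extends σ M)).card *
      (univ.filter (fun σ : Equiv.Perm (Fin N) => IsPM σ ∧ Extends σ F₀)).card ≤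
    (univ.filter (fun σ : Equiv.Perm (Fin N) =>
        IsPM σ ∧ Extends σ F₀ ∧ ∀ M ∈ S, ¬ Extends σ M)).card *
      (univ.filter (fun σ : Equiv.Perm (Fin N) => IsPM σ ∧ Extends σ F)).card := by
  intro k
  induction k with
  | zero =>
    intro F₀ hsub hcard
    have hF₀ : F₀ = F :=
      Finset.Subset.antisymm hsub (sdiff_eq_empty_iff_subset.mp (card_eq_zero.mp hcard))
    subst hF₀
    exact le_rfl
  | succ k ih =>
    intro F₀ hsub hcard
    have hne : (F \ F₀).Nonempty := by rw [← card_pos, hcard]; omega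
    obtain ⟨e, he⟩ := hne
    have heF : e ∈ F := (mem_sdiff.mp he).1
    have heF₀ : e ∉ F₀ := (mem_sdiff.mp he).2
    have hsub1 : insert e F₀ ⊆ F := insert_subset heF hsub
    have hcard1 : (F \ insert e F₀).card = k := by
      rw [Finset.sdiff_insert, card_erase_of_mem he, hcard]
      omega
    have H1 := ih (insert e F₀) hsub1 hcard1
    have H2 := step F hF S hS hSm F₀ hsub e heF heF₀
    have hpos : 0 < (univ.filter (fun σ : Equiv.Perm (Fin N) =>
        IsPM σ ∧ Extends σ (insert e F₀))).card :=
      filter_pm_pos hN _ (pm_subset hsub1 hF)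
    set mF := (univ.filter (fun σ : Equiv.Perm (Fin N) =>
        IsPM σ ∧ Extends σ F ∧ ∀ M ∈ S, ¬ Extends σ M)).card with hmF
    set n₀ := (univ.filter (fun σ : Equiv.Perm (Fin N) => IsPM σ ∧ Extends σ F₀)).card with hn₀
    set n₁ := (univ.filter (fun σ : Equiv.Perm (Fin N) =>
        IsPM σ ∧ Extends σ (insert e F₀))).card with hn₁
    set m₀ := (univ.filter (fun σ : Equiv.Perm (Fin N) =>
        IsPM σ ∧ Extends σ F₀ ∧ ∀ M ∈ S, ¬ Extends σ M)).card with hm₀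
    set m₁ := (univ.filter (fun σ : Equiv.Perm (Fin N) =>
        IsPM σ ∧ Extends σ (insert e F₀) ∧ ∀ M ∈ S, ¬ Extends σ M)).card with hm₁
    set nF := (univ.filter (fun σ : Equiv.Perm (Fin N) => IsPM σ ∧ Extends σ F)).card with hnF
    -- H1 : mF * n₁ ≤ m₁ * nF ; H2 : m₁ * n₀ ≤ m₀ * n₁ ; goal : mF * n₀ ≤ m₀ * nF
    by_cases hm1 : m₁ = 0
    · have h0 : mF * n₁ = 0 := Nat.le_antisymm (by rw [← Nat.zero_mul nF, ← hm1]; exact H1)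
        (Nat.zero_le _)
      rcases Nat.mul_eq_zero.mp h0 with h | h
      · rw [h, Nat.zero_mul]; exact Nat.zero_le _
      · omega
    · have keyineq : mF * n₀ * (n₁ * m₁) ≤ m₀ * nF * (n₁ * m₁) := by
        calc mF * n₀ * (n₁ * m₁) = (mF * n₁) * (m₁ * n₀) := by ring
          _ ≤ (m₁ * nF) * (m₀ * n₁) := Nat.mul_le_mul H1 H2
          _ = m₀ * nF * (n₁ * m₁) := by ring
      exact Nat.le_of_mul_le_mul_right keyineq (Nat.mul_pos hpos (Nat.pos_of_ne_zero hm1))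


end NegDep

open Finset NegDep in
/-- The conflict graph on a collection `𝓜` of partial matchings of `K_N` (`N` even)
is a negative dependency graph for the canonical events `A_M`: for any `F ∈ 𝓜` and
any set `S ⊆ 𝓜` of matchings not in conflict with `F`,
`Pr(A_F | ∧_{M ∈ S} ¬A_M) ≤ Pr(A_F)`, probabilities over a uniform random perfect
matching of `K_N`. -/
theorem conflict_graph_negative_dependency (N : ℕ) (hN : Even N)
    (𝓜 : Finset (Finset (Fin N × Fin N)))
    (h𝓜 : ∀ M ∈ 𝓜, IsPartialMatching M)
    (F : Finset (Fin N × Fin N)) (hF : F ∈ 𝓜)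
    (S : Finset (Finset (Fin N × Fin N))) (hS𝓜 : S ⊆ 𝓜)
    (hS : ∀ M ∈ S, M ≠ F ∧ ¬ Conflict F M)
    (hpos : 0 < Nat.card {f : Equiv.Perm (Fin N) // IsPM f ∧ ∀ M ∈ S, ¬ Extends f M}) :
    (Nat.card {f : Equiv.Perm (Fin N) //
          IsPM f ∧ Extends f F ∧ ∀ M ∈ S, ¬ Extends f M} : ℚ) /
        Nat.card {f : Equiv.Perm (Fin N) // IsPM f ∧ ∀ M ∈ S, ¬ Extends f M}
      ≤ (Nat.card {f : Equiv.Perm (Fin N) // IsPM f ∧ Extends f F} : ℚ) /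
        Nat.card {f : Equiv.Perm (Fin N) // IsPM f} := by
  classical
  have hFpm : IsPartialMatching F := h𝓜 F hF
  have hSm : ∀ M ∈ S, ∀ q ∈ M, q.1 ≠ q.2 := fun M hM => (h𝓜 M (hS𝓜 hM)).1
  have hconf : ∀ M ∈ S, ¬ Conflict F M := fun M hM => (hS M hM).2
  have hcard : ∀ (p : Equiv.Perm (Fin N) → Prop),
      Nat.card {f : Equiv.Perm (Fin N) // p f} = (univ.filter p).card := by
    intro p
    rw [Nat.card_eq_fintype_card, Fintype.card_subtype]
  rw [hcard, hcard, hcard, hcard]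
  rw [hcard] at hpos
  have hΩ : 0 < (univ.filter (fun σ : Equiv.Perm (Fin N) => IsPM σ)).card := by
    have hempty : IsPartialMatching (∅ : Finset (Fin N × Fin N)) := by
      constructor <;> simp
    have := filter_pm_pos hN ∅ hempty
    have hEq : (univ.filter (fun σ : Equiv.Perm (Fin N) =>
        IsPM σ ∧ Extends σ (∅ : Finset (Fin N × Fin N))))
        = univ.filter (fun σ : Equiv.Perm (Fin N) => IsPM σ) := by
      apply filter_congr
      intro σ _
      simp [Extends]
    rwa [hEq] at this
  rw [div_le_div_iff₀ (by exact_mod_cast hpos) (by exact_mod_cast hΩ)]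
  have main := chain hN F hFpm S hconf hSm F.card ∅ (empty_subset F) (by simp)
  have hEq1 : (univ.filter (fun σ : Equiv.Perm (Fin N) =>
      IsPM σ ∧ Extends σ (∅ : Finset (Fin N × Fin N))))
      = univ.filter (fun σ : Equiv.Perm (Fin N) => IsPM σ) := by
    apply filter_congr
    intro σ _
    simp [Extends]
  have hEq2 : (univ.filter (fun σ : Equiv.Perm (Fin N) =>
      IsPM σ ∧ Extends σ (∅ : Finset (Fin N × Fin N)) ∧ ∀ M ∈ S, ¬ Extends σ M))
      = univ.filter (fun σ : Equiv.Perm (Fin N) => IsPM σ ∧ ∀ M ∈ S, ¬ Extends σ M) := by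
    apply filter_congr
    intro σ _
    simp [Extends]
  rw [hEq1, hEq2] at main
  rw [mul_comm ((univ.filter (fun σ : Equiv.Perm (Fin N) =>
      IsPM σ ∧ ∀ M ∈ S, ¬ Extends σ M)).card)] at main
  rw [← Nat.cast_mul, ← Nat.cast_mul, Nat.cast_le]
  convert main using 2 <;> congr
end

section
/- In the uniform probability space of perfect matchings of K_N (N even), the probability that every edge of a random perfect matching has at most one endpoint in a fixed set S of size s is 2^s · C(N/2, s) / C(N, s). -/
open Equiv Finset

/-- general version of the property: `f` is a perfect matching traversing `S`. -/
def PMT {α : Type*} [DecidableEq α] (S : Finset α) (f : Equiv.Perm α) : Prop :=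
  (∀ x, f x ≠ x ∧ f (f x) = x) ∧ ∀ x ∈ S, f x ∉ S

instance {α : Type*} [Fintype α] [DecidableEq α] (S : Finset α) :
    DecidablePred (PMT S) := fun f => by unfold PMT; infer_instance

/-- number of perfect matchings of an `n`-element set. -/
def pmCount : ℕ → ℕ
  | 0 => 1
  | 1 => 0
  | (n+2) => (n+1) * pmCount n

/-- number of perfect matchings of an `n`-element set traversing a fixed `s`-element set. -/
def tCount (n s : ℕ) : ℕ := (n - s).descFactorial s * pmCount (n - 2*s)

section Eg
variable {α : Type*} [DecidableEq α] (x b : α) (g : Equiv.Perm {y : α // y ≠ x ∧ y ≠ b})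

theorem Eg_x : (Equiv.swap x b * Equiv.Perm.ofSubtype g) x = b := by
  rw [Equiv.Perm.mul_apply, Equiv.Perm.ofSubtype_apply_of_not_mem]
  · exact Equiv.swap_apply_left x b
  · simp

theorem Eg_b : (Equiv.swap x b * Equiv.Perm.ofSubtype g) b = x := by
  rw [Equiv.Perm.mul_apply, Equiv.Perm.ofSubtype_apply_of_not_mem]
  · exact Equiv.swap_apply_right x b
  · simp

theorem Eg_mem {y : α} (hy : y ≠ x ∧ y ≠ b) :
    (Equiv.swap x b * Equiv.Perm.ofSubtype g) y = (g ⟨y, hy⟩ : α) := by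
  rw [Equiv.Perm.mul_apply, Equiv.Perm.ofSubtype_apply_of_mem g hy]
  exact Equiv.swap_apply_of_ne_of_ne (g ⟨y, hy⟩).2.1 (g ⟨y, hy⟩).2.2

end Eg

section FiberEquiv

variable {α : Type*} [Fintype α] [DecidableEq α] (S : Finset α) (x b : α)

/-- the key equivalence: matchings traversing `S` sending `x ∈ S` to `b ∉ S`
correspond to matchings of the complement of `{x, b}` traversing `S \ {x}`. -/
def fiberEquiv (hx : x ∈ S) (hb : b ∉ S) :
    {f : Equiv.Perm α // PMT S f ∧ f x = b} ≃
      {g : Equiv.Perm {y : α // y ≠ x ∧ y ≠ b} //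
        PMT (S.subtype fun y => y ≠ x ∧ y ≠ b) g} where
  toFun := fun ⟨f, hf, hfx⟩ => by
    refine ⟨f.subtypePerm ?_, ?_, ?_⟩
    · intro y
      have h1 : f y = x ↔ y = b := by
        constructor
        · intro h; rw [← hfx, ← h, (hf.1 y).2]
        · intro h; rw [h, ← hfx, (hf.1 x).2]
      have h2 : f y = b ↔ y = x := by
        rw [← hfx]; exact f.injective.eq_iff
      simp only [ne_eq, h1, h2]; tauto
    · intro y
      refine ⟨?_, ?_⟩
      · intro h
        exact (hf.1 y.1).1 (congrArg Subtype.val h)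
      · exact Subtype.ext (hf.1 y.1).2
    · intro y hy
      simp only [Finset.mem_subtype, Perm.subtypePerm_apply] at *
      exact hf.2 _ hy
  invFun := fun ⟨g, hg⟩ => by
    have hbx : b ≠ x := fun h => hb (h ▸ hx)
    refine ⟨(Equiv.swap x b) * Equiv.Perm.ofSubtype g, ⟨?_, ?_⟩, ?_⟩
    · intro y
      by_cases hyx : y = x
      · rw [hyx, Eg_x x b g]
        refine ⟨hbx, ?_⟩
        rw [Eg_b x b g]
      · by_cases hyb : y = b
        · rw [hyb, Eg_b x b g]
          exact ⟨hbx.symm, Eg_x x b g⟩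
        · have hy : y ≠ x ∧ y ≠ b := ⟨hyx, hyb⟩
          rw [Eg_mem x b g hy]
          constructor
          · intro h
            exact (hg.1 ⟨y, hy⟩).1 (Subtype.ext h)
          · have hy2 := (g ⟨y, hy⟩).2
            rw [Eg_mem x b g hy2]
            have : (⟨(g ⟨y, hy⟩ : α), hy2⟩ : {y : α // y ≠ x ∧ y ≠ b}) = g ⟨y, hy⟩ :=
              Subtype.ext rfl
            rw [this]
            exact congrArg Subtype.val (hg.1 ⟨y, hy⟩).2
    · intro y hyS
      by_cases hyx : y = x
      · rw [hyx, Eg_x x b g]; exact hb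
      · have hyb : y ≠ b := fun h => hb (h ▸ hyS)
        have hy : y ≠ x ∧ y ≠ b := ⟨hyx, hyb⟩
        rw [Eg_mem x b g hy]
        have := hg.2 ⟨y, hy⟩ (Finset.mem_subtype.2 hyS)
        exact fun h => this (Finset.mem_subtype.2 h)
    · exact Eg_x x b g
  left_inv := by
    rintro ⟨f, hf, hfx⟩
    have hbx : b ≠ x := fun h => hb (h ▸ hx)
    apply Subtype.ext
    apply Equiv.ext
    intro y
    by_cases hyx : y = x
    · rw [hyx, Eg_x x b _, hfx]
    · by_cases hyb : y = b
      · rw [hyb, Eg_b x b _]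
        exact ((congrArg f hfx.symm).trans (hf.1 x).2).symm
      · exact Eg_mem x b _ ⟨hyx, hyb⟩
  right_inv := by
    rintro ⟨g, hg⟩
    have hbx : b ≠ x := fun h => hb (h ▸ hx)
    apply Subtype.ext
    apply Equiv.ext
    intro z
    apply Subtype.ext
    show (Equiv.swap x b * Equiv.Perm.ofSubtype g) z.1 = (g z : α)
    rw [Eg_mem x b g z.2]

end FiberEquiv

theorem card_pred_subtype {α : Type*} [Fintype α] [DecidableEq α] (x b : α) (hxb : x ≠ b) :
    Fintype.card {y : α // y ≠ x ∧ y ≠ b} = Fintype.card α - 2 := by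
  rw [Fintype.card_subtype]
  have h : Finset.univ.filter (fun y : α => y ≠ x ∧ y ≠ b) = Finset.univ \ {x, b} := by
    ext y
    simp [not_or]
  rw [h, Finset.card_sdiff_of_subset (Finset.subset_univ _), Finset.card_univ,
    Finset.card_insert_of_notMem (by simp [hxb]), Finset.card_singleton]

theorem card_subtype_S {α : Type*} [DecidableEq α] (S : Finset α) (x b : α)
    (hx : x ∈ S) (hb : b ∉ S) :
    (S.subtype fun y => y ≠ x ∧ y ≠ b).card = S.card - 1 := by
  rw [Finset.card_subtype]
  have h : S.filter (fun y => y ≠ x ∧ y ≠ b) = S.erase x := by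
    ext y
    simp only [Finset.mem_filter, Finset.mem_erase]
    constructor
    · rintro ⟨h1, h2, h3⟩; exact ⟨h2, h1⟩
    · rintro ⟨h1, h2⟩; exact ⟨h2, h1, fun h => hb (h ▸ h2)⟩
  rw [h, Finset.card_erase_of_mem hx]

theorem count_step {α : Type*} [Fintype α] [DecidableEq α] (S : Finset α) (x : α) (hx : x ∈ S)
    (C : ℕ)
    (IH : ∀ b : α, b ∉ S →
      Fintype.card {g : Equiv.Perm {y : α // y ≠ x ∧ y ≠ b} //
        PMT (S.subtype fun y => y ≠ x ∧ y ≠ b) g} = C) :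
    Fintype.card {f : Equiv.Perm α // PMT S f} = (Fintype.card α - S.card) * C := by
  have e1 : {f : Equiv.Perm α // PMT S f} ≃
      Σ b : α, {F : {f : Equiv.Perm α // PMT S f} // (F.1 : Equiv.Perm α) x = b} :=
    (Equiv.sigmaFiberEquiv fun F : {f : Equiv.Perm α // PMT S f} => (F.1 : Equiv.Perm α) x).symm
  rw [Fintype.card_congr e1, Fintype.card_sigma]
  have hcard : ∀ b : α,
      Fintype.card {F : {f : Equiv.Perm α // PMT S f} // (F.1 : Equiv.Perm α) x = b}
        = if b ∈ S then 0 else C := by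
    intro b
    by_cases hb : b ∈ S
    · rw [if_pos hb]
      rw [Fintype.card_eq_zero_iff]
      exact ⟨fun F => (F.1.2.2 x hx) (by rw [F.2]; exact hb)⟩
    · rw [if_neg hb]
      have e2 : {F : {f : Equiv.Perm α // PMT S f} // (F.1 : Equiv.Perm α) x = b} ≃
          {f : Equiv.Perm α // PMT S f ∧ f x = b} :=
        Equiv.subtypeSubtypeEquivSubtypeInter (fun f : Equiv.Perm α => PMT S f) (fun f => f x = b)
      rw [Fintype.card_congr (e2.trans (fiberEquiv S x b hx hb))]
      exact IH b hb
  rw [Finset.sum_congr rfl (fun b _ => hcard b)]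
  rw [Finset.sum_ite, Finset.sum_const_zero, Finset.sum_const, zero_add, smul_eq_mul]
  congr 1
  rw [Finset.filter_not, Finset.card_sdiff_of_subset (Finset.filter_subset _ _), Finset.card_univ]
  congr 1
  rw [Finset.filter_univ_mem]

theorem tCount_step {n s : ℕ} (h1 : 1 ≤ s) (h2 : s ≤ n) :
    (n - s) * tCount (n - 2) (s - 1) = tCount n s := by
  obtain ⟨s', rfl⟩ : ∃ s', s = s' + 1 := ⟨s - 1, by omega⟩
  rcases Nat.lt_or_ge n (s' + 2) with h | h
  · have hn : n = s' + 1 := by omega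
    subst hn
    simp [tCount, Nat.sub_self]
  · obtain ⟨k, rfl⟩ : ∃ k, n = s' + 2 + k := ⟨n - s' - 2, by omega⟩
    unfold tCount
    have e1 : s' + 2 + k - (s' + 1) = k + 1 := by omega
    have e2 : s' + 2 + k - 2 = s' + k := by omega
    have e3 : s' + 1 - 1 = s' := by omega
    have e4 : s' + k - s' = k := by omega
    have e5 : s' + k - 2 * s' = k - s' := by omega
    have e6 : s' + 2 + k - 2 * (s' + 1) = k - s' := by omega
    rw [e1, e2, e3, e4, e5, e6, Nat.succ_descFactorial_succ]
    ring

theorem tCount_one (n : ℕ) (h : 1 ≤ n) : tCount n 1 = tCount n 0 := by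
  match n with
  | 1 => decide
  | (k + 2) =>
    show (k + 2 - 1).descFactorial 1 * pmCount (k + 2 - 2)
      = (k + 2 - 0).descFactorial 0 * pmCount (k + 2 - 2 * 0)
    simp only [Nat.descFactorial_one, Nat.descFactorial_zero, one_mul]
    have e1 : k + 2 - 1 = k + 1 := by omega
    have e2 : k + 2 - 2 = k := by omega
    have e3 : k + 2 - 2 * 0 = k + 2 := by omega
    rw [e1, e2, e3]
    rfl

theorem count_aux : ∀ (n : ℕ) (α : Type) [Fintype α] [DecidableEq α] (S : Finset α),
    Fintype.card α = n → Fintype.card {f : Equiv.Perm α // PMT S f} = tCount n S.card := by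
  intro n
  induction n using Nat.strong_induction_on with
  | _ n IH =>
    intro α _ _ S hn
    have key : ∀ T : Finset α, T.Nonempty →
        Fintype.card {f : Equiv.Perm α // PMT T f} = tCount n T.card := by
      rintro T ⟨x, hx⟩
      have hn1 : 1 ≤ n := by
        rw [← hn]
        exact Fintype.card_pos_iff.mpr ⟨x⟩
      have hb2 : n - 2 < n := by omega
      have hIH' : ∀ b : α, b ∉ T →
          Fintype.card {g : Equiv.Perm {y : α // y ≠ x ∧ y ≠ b} //
            PMT (T.subtype fun y => y ≠ x ∧ y ≠ b) g} = tCount (n - 2) (T.card - 1) := by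
        intro b hb
        have hxb : x ≠ b := fun h => hb (h ▸ hx)
        have := IH (n - 2) hb2 {y : α // y ≠ x ∧ y ≠ b}
          (T.subtype fun y => y ≠ x ∧ y ≠ b)
          (by rw [card_pred_subtype x b hxb, hn])
        rw [this, card_subtype_S T x b hx hb]
      rw [count_step T x hx _ hIH', hn]
      exact tCount_step (Finset.card_pos.mpr ⟨x, hx⟩)
        (by rw [← hn, ← Finset.card_univ]; exact Finset.card_le_univ T)
    rcases S.eq_empty_or_nonempty with rfl | hS
    · rcases Nat.eq_zero_or_pos n with rfl | hn1
      · have hE : IsEmpty α := Fintype.card_eq_zero_iff.mp hn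
        have hall : ∀ f : Equiv.Perm α, PMT (∅ : Finset α) f :=
          fun f => ⟨fun y => isEmptyElim y, fun y hy => absurd hy (by simp)⟩
        rw [Fintype.card_congr (Equiv.subtypeUnivEquiv hall), Fintype.card_perm, hn]
        simp [tCount, pmCount]
      · have hne : Nonempty α := by
          rw [← Fintype.card_pos_iff, hn]; exact hn1
        obtain ⟨x⟩ := hne
        have e : {f : Equiv.Perm α // PMT (∅ : Finset α) f} ≃ {f : Equiv.Perm α // PMT {x} f} := by
          apply Equiv.subtypeEquivRight
          intro f
          constructor
          · rintro ⟨h1, -⟩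
            refine ⟨h1, ?_⟩
            intro y hy
            rw [Finset.mem_singleton] at hy
            subst hy
            rw [Finset.mem_singleton]
            exact (h1 y).1
          · rintro ⟨h1, -⟩
            exact ⟨h1, by simp⟩
        rw [Fintype.card_congr e, key {x} ⟨x, by simp⟩, Finset.card_singleton,
          Finset.card_empty]
        exact tCount_one n hn1
    · exact key S hS

theorem count_main {α : Type} [Fintype α] [DecidableEq α] (S : Finset α) :
    Fintype.card {f : Equiv.Perm α // PMT S f} = tCount (Fintype.card α) S.card :=
  count_aux _ α S rfl

theorem pmCount_mul (m : ℕ) : pmCount (2 * m) * (2 ^ m * m.factorial) = (2 * m).factorial := by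
  induction m with
  | zero => decide
  | succ k ih =>
    have h2 : 2 * (k + 1) = 2 * k + 2 := by ring
    rw [h2]
    have hpm : pmCount (2 * k + 2) = (2 * k + 1) * pmCount (2 * k) := rfl
    have hfac : (2 * k + 2).factorial = (2 * k + 2) * ((2 * k + 1) * (2 * k).factorial) := by
      rw [show (2 * k + 2) = (2 * k + 1) + 1 from rfl, Nat.factorial_succ, Nat.factorial_succ]
    rw [hpm, hfac, pow_succ, Nat.factorial_succ, ← ih]
    ring

theorem pmCount_ne_zero (m : ℕ) : pmCount (2 * m) ≠ 0 := by
  intro h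
  have h2 := pmCount_mul m
  rw [h, zero_mul] at h2
  exact (Nat.factorial_ne_zero _) h2.symm

/-- For a fixed set `S` of size `s` in `K_{2m}`, the probability that a uniformly
random perfect matching traverses `S` (no edge of the matching has both endpoints
in `S`) equals `2^s · C(m, s) / C(2m, s)`. -/
theorem prob_traverses (m : ℕ) (S : Finset (Fin (2 * m))) :
    (Nat.card {f : Equiv.Perm (Fin (2 * m)) // IsPM f ∧ ∀ x ∈ S, f x ∉ S} : ℚ) /
        Nat.card {f : Equiv.Perm (Fin (2 * m)) // IsPM f}
      = 2 ^ S.card * (m.choose S.card) / ((2 * m).choose S.card) := by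
  have hsle : S.card ≤ 2 * m := by
    simpa using Finset.card_le_univ S
  have hA : Nat.card {f : Equiv.Perm (Fin (2 * m)) // IsPM f ∧ ∀ x ∈ S, f x ∉ S}
      = tCount (2 * m) S.card := by
    have e : {f : Equiv.Perm (Fin (2 * m)) // IsPM f ∧ ∀ x ∈ S, f x ∉ S}
        ≃ {f : Equiv.Perm (Fin (2 * m)) // PMT S f} :=
      Equiv.subtypeEquivRight (fun f => Iff.rfl)
    rw [Nat.card_congr e, Nat.card_eq_fintype_card, count_main, Fintype.card_fin]
  have hB : Nat.card {f : Equiv.Perm (Fin (2 * m)) // IsPM f} = pmCount (2 * m) := by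
    have e : {f : Equiv.Perm (Fin (2 * m)) // IsPM f}
        ≃ {f : Equiv.Perm (Fin (2 * m)) // PMT (∅ : Finset (Fin (2 * m))) f} :=
      Equiv.subtypeEquivRight (fun f => ⟨fun h => ⟨h, by simp⟩, fun h => h.1⟩)
    rw [Nat.card_congr e, Nat.card_eq_fintype_card, count_main, Fintype.card_fin,
      Finset.card_empty]
    simp [tCount]
  rw [hA, hB]
  set s := S.card with hs
  clear_value s
  clear hA hB hs S
  have hfac0 : ∀ j : ℕ, (j.factorial : ℚ) ≠ 0 := fun j =>
    Nat.cast_ne_zero.mpr (Nat.factorial_ne_zero j)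
  rcases lt_or_ge m s with hlt | hge
  · have h1 : tCount (2 * m) s = 0 := by
      unfold tCount
      rw [Nat.descFactorial_eq_zero_iff_lt.mpr (by omega : 2 * m - s < s), zero_mul]
    rw [h1, Nat.choose_eq_zero_of_lt hlt]
    simp
  · obtain ⟨k, rfl⟩ : ∃ k, m = s + k := ⟨m - s, by omega⟩
    have htc : tCount (2 * (s + k)) s = (s + 2 * k).descFactorial s * pmCount (2 * k) := by
      unfold tCount
      rw [show 2 * (s + k) - s = s + 2 * k by omega, show 2 * (s + k) - 2 * s = 2 * k by omega]
    rw [htc]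
    have hdesc : ((s + 2 * k).descFactorial s : ℚ)
        = (s + 2 * k).factorial / (2 * k).factorial := by
      rw [eq_div_iff (hfac0 _)]
      have h := Nat.factorial_mul_descFactorial (show s ≤ s + 2 * k by omega)
      rw [show s + 2 * k - s = 2 * k by omega] at h
      rw [mul_comm] at h
      exact_mod_cast h
    have hpow0 : ∀ j : ℕ, ((2 : ℚ) ^ j) ≠ 0 := fun j => pow_ne_zero j two_ne_zero
    have hpm : (pmCount (2 * (s + k)) : ℚ)
        = (2 * (s + k)).factorial / (2 ^ (s + k) * (s + k).factorial) := by
      rw [eq_div_iff (mul_ne_zero (hpow0 _) (hfac0 _))]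
      exact_mod_cast pmCount_mul (s + k)
    have hpmk : (pmCount (2 * k) : ℚ) = (2 * k).factorial / (2 ^ k * k.factorial) := by
      rw [eq_div_iff (mul_ne_zero (hpow0 _) (hfac0 _))]
      exact_mod_cast pmCount_mul k
    have hcm : (((s + k).choose s : ℕ) : ℚ)
        = (s + k).factorial / (s.factorial * k.factorial) := by
      rw [eq_div_iff (mul_ne_zero (hfac0 _) (hfac0 _))]
      have h := Nat.choose_mul_factorial_mul_factorial (show s ≤ s + k by omega)
      rw [show s + k - s = k by omega] at h
      push_cast [← h]
      ring
    have hc2m : (((2 * (s + k)).choose s : ℕ) : ℚ)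
        = (2 * (s + k)).factorial / (s.factorial * (s + 2 * k).factorial) := by
      rw [eq_div_iff (mul_ne_zero (hfac0 _) (hfac0 _))]
      have h := Nat.choose_mul_factorial_mul_factorial (show s ≤ 2 * (s + k) by omega)
      rw [show 2 * (s + k) - s = s + 2 * k by omega] at h
      push_cast [← h]
      ring
    push_cast
    rw [hdesc, hpm, hpmk, hcm, hc2m]
    field_simp
    ring
end

section
/- For any fixed integer k ≥ 1, the probability that a uniformly random permutation of an n-element set has no cycle of length exactly k tends to e^{−1/k} as n → ∞. -/
/-!
Let `m σ` be the number of `k`-cycles of a permutation `σ` of an `n`-element set. A `j`-tuple of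
distinct `k`-cycles of `σ`, each with a marked point, is the same as an embedding `f` of `j`
disjoint standard `k`-cycles that intertwines them with `σ`. Counting the pairs `(σ, f)` in two
ways (for fixed `σ` there are `(m σ)_j k^j` such `f`; for fixed `f`, `σ` is prescribed on the
image of `f` and arbitrary on the other `n - jk` points) gives `∑_σ (m σ)_j k^j = n!` for
`jk ≤ n`. As `m σ ≤ n / k`, inclusion-exclusion `[m = 0] = ∑_{i ≤ n/k} (-1)^i C(m, i)`
turns this into the exact formula `P(m = 0) = ∑_{i ≤ n/k} (-1/k)^i / i!`, a partial sum of the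
exponential series at `-1/k`.
-/

open Filter Function Finset

theorem Nat.card_eq_sum_card_fiber {β γ : Type*} [Finite β] [Fintype γ] (f : β → γ) :
    Nat.card β = ∑ c, Nat.card {b // f b = c} := by
  rw [← Nat.card_congr (Equiv.sigmaFiberEquiv f), Nat.card_sigma]

theorem Nat.sum_card_subtype_comm {A B : Type*} [Fintype A] [Fintype B] (r : A → B → Prop) :
    ∑ a, Nat.card {b // r a b} = ∑ b, Nat.card {a // r a b} := by
  rw [← Nat.card_sigma, ← Nat.card_sigma,
    ← Nat.card_congr (Equiv.subtypeProdEquivSigmaSubtype r),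
    ← Nat.card_congr (Equiv.subtypeProdEquivSigmaSubtype fun b a => r a b)]
  exact Nat.card_congr ((Equiv.prodComm A B).subtypeEquiv fun _ => Iff.rfl)

theorem Nat.card_injective_comp_of_card_fiber {ι K O : Type*} [Fintype ι] [Finite K]
    [Fintype O] (q : K → O) {c : ℕ} (hq : ∀ o, Nat.card {y // q y = o} = c) :
    Nat.card {g : ι → K // Injective (q ∘ g)} =
      (Fintype.card O).descFactorial (Fintype.card ι) * c ^ Fintype.card ι := by
  classical
  let φ : {g : ι → K // Injective (q ∘ g)} → (ι ↪ O) := fun g => ⟨q ∘ g, g.2⟩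
  have hfiber (h : ι ↪ O) : Nat.card {g // φ g = h} = c ^ Fintype.card ι := by
    have e : {g // φ g = h} ≃ ∀ i, {y // q y = h i} :=
      { toFun g i := ⟨g.1.1 i, congrFun (congrArg DFunLike.coe g.2) i⟩
        invFun G := ⟨⟨fun i => G i, by
            convert h.injective using 1; funext i; exact (G i).2⟩,
          DFunLike.ext _ _ fun i => (G i).2⟩
        left_inv _ := rfl
        right_inv _ := rfl }
    simp [Nat.card_congr e, Nat.card_pi, hq]
  rw [Nat.card_eq_sum_card_fiber φ]
  simp [hfiber, Fintype.card_embedding_eq]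

theorem alternating_sum_range_choose_of_le {R : Type*} [Ring R] {m N : ℕ} (h : m ≤ N) :
    ∑ i ∈ range (N + 1), (-1 : R) ^ i * m.choose i = if m = 0 then 1 else 0 := by
  rw [← sum_subset (range_subset_range.2 (Nat.succ_le_succ h)) fun i _ hi => by
    rw [Nat.choose_eq_zero_of_lt (by simpa using hi), Nat.cast_zero, mul_zero]]
  have := congrArg (Int.cast : ℤ → R) (Int.alternating_sum_range_choose (n := m))
  push_cast at this
  exact this

theorem Function.Semiconj.minimalPeriod_apply_eq {α β : Type*} {fa : α → α} {fb : β → β}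
    {f : α → β} (hf : Injective f) (h : Semiconj f fa fb) (a : α) :
    minimalPeriod fb (f a) = minimalPeriod fa a :=
  minimalPeriod_eq_minimalPeriod_iff.2 fun n => by
    simp only [IsPeriodicPt, IsFixedPt, ← (h.iterate_right n) a, hf.eq_iff]

namespace Equiv.Perm

theorem card_semiconj_embedding {α β : Type*} [Fintype α] [Fintype β] (π : Perm β)
    (f : β ↪ α) :
    Nat.card {σ : Perm α // Semiconj f π σ} =
      (Fintype.card α - Fintype.card β).factorial := by
  classical
  set τ := π.viaEmbedding f
  have hτ : Semiconj f π τ := fun b => (viaEmbedding_apply π f b).symm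
  have e : {σ : Perm α // Semiconj f π σ} ≃
      {ρ : Perm α // ∀ a, ¬a ∉ Set.range f → ρ a = a} :=
    { toFun σ := ⟨τ⁻¹ * σ, by
        rintro _ h; obtain ⟨b, rfl⟩ := not_not.1 h
        rw [Perm.mul_apply, ← σ.2 b, hτ b]; exact τ.symm_apply_apply _⟩
      invFun ρ := ⟨τ * ρ, fun b => by
        rw [Perm.mul_apply, ρ.2 (f b) (by simp), hτ b]⟩
      left_inv σ := by simp
      right_inv ρ := by simp }
  rw [Nat.card_congr (e.trans (Perm.subtypeEquivSubtypePerm _).symm), Nat.card_perm,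
    Nat.card_eq_fintype_card, Fintype.card_subtype_compl, Fintype.card_range]

section Cycles

variable {α : Type*} {σ : Perm α} {k : ℕ} {x y : α}

def cycleSetoid (σ : Perm α) (k : ℕ) : Setoid {x : α // minimalPeriod σ x = k} :=
  (SameCycle.setoid σ).comap Subtype.val

/-- Unlike `σ.cycleType.count k`, this also counts the fixed points when `k = 1`. -/
noncomputable def numCyclesOfLength (σ : Perm α) (k : ℕ) : ℕ :=
  Nat.card (Quotient (σ.cycleSetoid k))

theorem sameCycle_iterate (σ : Perm α) (x : α) (t : ℕ) : SameCycle σ x (σ^[t] x) :=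
  ⟨t, by rw [zpow_natCast, iterate_eq_pow]⟩

variable [Finite α]

theorem SameCycle.exists_iterate_eq_of_lt (h : SameCycle σ x y) :
    ∃ t < minimalPeriod σ x, σ^[t] x = y := by
  obtain ⟨t, rfl⟩ := h.exists_nat_pow_eq
  refine ⟨t % minimalPeriod σ x, Nat.mod_lt _ ?_, ?_⟩
  · exact minimalPeriod_pos_of_mem_periodicPts (σ.injective.mem_periodicPts x)
  · rw [iterate_mod_minimalPeriod_eq, iterate_eq_pow]

theorem card_cycleSetoid_fiber (c : Quotient (σ.cycleSetoid k)) :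
    Nat.card {y // Quotient.mk _ y = c} = k := by
  induction c using Quotient.ind with | _ x =>
  have hlt (t : Fin k) : (t : ℕ) < minimalPeriod σ x := by rw [x.2]; exact t.2
  let φ : Fin k → {y // Quotient.mk (σ.cycleSetoid k) y = ⟦x⟧} := fun t =>
    ⟨⟨σ^[t] x, by rw [minimalPeriod_apply_iterate (σ.injective.mem_periodicPts _), x.2]⟩,
      Quotient.sound (sameCycle_iterate σ x t).symm⟩
  have hφ : Bijective φ := by
    refine ⟨fun s t hst => Fin.ext ?_, fun ⟨y, hy⟩ => ?_⟩
    · exact (iterate_eq_iterate_iff_of_lt_minimalPeriod (hlt s) (hlt t)).1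
        (congrArg (fun y => y.1.1) hst)
    · obtain ⟨t, ht, hty⟩ := (Quotient.exact hy).symm.exists_iterate_eq_of_lt
      exact ⟨⟨t, x.2 ▸ ht⟩, Subtype.ext (Subtype.ext hty)⟩
  rw [← Nat.card_congr (Equiv.ofBijective φ hφ), Nat.card_eq_fintype_card, Fintype.card_fin]

theorem numCyclesOfLength_mul :
    σ.numCyclesOfLength k * k = Nat.card {x // minimalPeriod σ x = k} := by
  have := Fintype.ofFinite (Quotient (σ.cycleSetoid k))
  rw [Nat.card_eq_sum_card_fiber (Quotient.mk (σ.cycleSetoid k))]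
  simp [card_cycleSetoid_fiber, numCyclesOfLength, Nat.card_eq_fintype_card]

theorem numCyclesOfLength_eq_zero_iff :
    σ.numCyclesOfLength k = 0 ↔ ∀ x, minimalPeriod σ x ≠ k := by
  rw [numCyclesOfLength, Finite.card_eq_zero_iff, ← not_nonempty_iff, nonempty_quotient_iff,
    not_nonempty_iff, isEmpty_subtype]

end Cycles

section StandardCycles

open Fin.NatCast

variable {α : Type*} {σ : Perm α} {j k : ℕ} [NeZero k] {x : α}

def standardCycles (j k : ℕ) [NeZero k] : Perm (Fin j × Fin k) :=
  (Equiv.refl _).prodCongr (Equiv.addRight 1)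

theorem standardCycles_iterate_apply (t : ℕ) (p : Fin j × Fin k) :
    (standardCycles j k)^[t] p = (p.1, p.2 + (t : Fin k)) := by
  induction t generalizing p with
  | zero => simp
  | succ t ih => rw [iterate_succ_apply', ih, Nat.cast_succ, ← add_assoc]; rfl

theorem minimalPeriod_standardCycles (p : Fin j × Fin k) :
    minimalPeriod (standardCycles j k) p = k := by
  have hper (t : ℕ) : IsPeriodicPt (standardCycles j k) t p ↔ k ∣ t := by
    simp [IsPeriodicPt, IsFixedPt, standardCycles_iterate_apply, Prod.ext_iff,
      Fin.natCast_eq_zero]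
  exact Nat.dvd_antisymm ((hper k).2 dvd_rfl).minimalPeriod_dvd
    ((hper _).1 (isPeriodicPt_minimalPeriod _ _))

theorem iterate_apply_of_semiconj_standardCycles {f : Fin j × Fin k → α}
    (hf : Semiconj f (standardCycles j k) σ) (i : Fin j) (c : Fin k) (t : ℕ) :
    σ^[t] (f (i, c)) = f (i, c + t) := by
  rw [← hf.iterate_right t, standardCycles_iterate_apply]

theorem iterate_val_add_one (hx : minimalPeriod σ x = k) (c : Fin k) :
    σ^[(c + 1 : Fin k)] x = σ (σ^[c] x) := by
  have hval : ((c + 1 : Fin k) : ℕ) = (c + 1) % minimalPeriod σ x := by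
    rw [hx, Fin.val_add, Fin.val_one', Nat.add_mod_mod]
  rw [hval, iterate_mod_minimalPeriod_eq, iterate_succ_apply']

def cyclesEmbedding (g : Fin j → {x // minimalPeriod σ x = k})
    (hg : Injective (Quotient.mk (σ.cycleSetoid k) ∘ g)) : Fin j × Fin k ↪ α where
  toFun p := σ^[p.2] (g p.1)
  inj' := by
    rintro ⟨a, s⟩ ⟨b, t⟩ hst
    change σ^[s] (g a).1 = σ^[t] (g b).1 at hst
    obtain rfl : a = b := hg (Quotient.sound ((sameCycle_iterate σ _ s).trans
      (hst ▸ (sameCycle_iterate σ _ t).symm)))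
    have hlt (c : Fin k) : (c : ℕ) < minimalPeriod σ (g a) := by rw [(g a).2]; exact c.2
    exact Prod.ext rfl
      (Fin.ext ((iterate_eq_iterate_iff_of_lt_minimalPeriod (hlt s) (hlt t)).1 hst))

theorem semiconj_cyclesEmbedding (g : Fin j → {x // minimalPeriod σ x = k})
    (hg : Injective (Quotient.mk (σ.cycleSetoid k) ∘ g)) :
    Semiconj (cyclesEmbedding g hg) (standardCycles j k) σ :=
  fun p => iterate_val_add_one (g p.1).2 p.2

variable [Finite α]

noncomputable def semiconjStandardCyclesEquiv (σ : Perm α) :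
    {f : Fin j × Fin k ↪ α // Semiconj f (standardCycles j k) σ} ≃
      {g : Fin j → {x // minimalPeriod σ x = k} //
        Injective (Quotient.mk (σ.cycleSetoid k) ∘ g)} where
  toFun f := ⟨fun i => ⟨f.1 (i, 0), by
      rw [f.2.minimalPeriod_apply_eq f.1.injective, minimalPeriod_standardCycles]⟩, by
    intro a b hab
    obtain ⟨t, -, ht⟩ := (Quotient.exact hab : SameCycle σ _ _).exists_iterate_eq_of_lt
    rw [iterate_apply_of_semiconj_standardCycles f.2] at ht
    exact (Prod.ext_iff.1 (f.1.injective ht)).1⟩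
  invFun g := ⟨cyclesEmbedding g.1 g.2, semiconj_cyclesEmbedding g.1 g.2⟩
  left_inv f := by
    refine Subtype.ext (DFunLike.ext _ _ fun ⟨i, c⟩ => ?_)
    change σ^[c] (f.1 (i, 0)) = f.1 (i, c)
    rw [iterate_apply_of_semiconj_standardCycles f.2, zero_add, Fin.cast_val_eq_self]
  right_inv g := by
    refine Subtype.ext (funext fun i => Subtype.ext ?_)
    change σ^[(0 : Fin k)] (g.1 i).1 = (g.1 i).1
    rw [Fin.val_zero, iterate_zero_apply]

theorem card_semiconj_standardCycles (σ : Perm α) :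
    Nat.card {f : Fin j × Fin k ↪ α // Semiconj f (standardCycles j k) σ} =
      (σ.numCyclesOfLength k).descFactorial j * k ^ j := by
  have := Fintype.ofFinite (Quotient (σ.cycleSetoid k))
  rw [Nat.card_congr (semiconjStandardCyclesEquiv σ),
    Nat.card_injective_comp_of_card_fiber _ card_cycleSetoid_fiber,
    Fintype.card_fin, numCyclesOfLength, Nat.card_eq_fintype_card]

end StandardCycles

variable {α : Type*} [Fintype α] {k : ℕ}

theorem numCyclesOfLength_le (hk : 0 < k) (σ : Perm α) :
    σ.numCyclesOfLength k ≤ Fintype.card α / k := by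
  rw [Nat.le_div_iff_mul_le hk, numCyclesOfLength_mul, ← Nat.card_eq_fintype_card]
  exact Finite.card_subtype_le _

variable [DecidableEq α] [NeZero k]

theorem sum_descFactorial_numCyclesOfLength_mul_pow {j : ℕ} (hj : j * k ≤ Fintype.card α) :
    ∑ σ : Perm α, (σ.numCyclesOfLength k).descFactorial j * k ^ j =
      (Fintype.card α).factorial := by
  calc ∑ σ : Perm α, (σ.numCyclesOfLength k).descFactorial j * k ^ j
      = ∑ σ : Perm α,
          Nat.card {f : Fin j × Fin k ↪ α // Semiconj f (standardCycles j k) σ} := by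
        simp only [card_semiconj_standardCycles]
    _ = ∑ f : Fin j × Fin k ↪ α,
          Nat.card {σ : Perm α // Semiconj f (standardCycles j k) σ} :=
        Nat.sum_card_subtype_comm _
    _ = (Fintype.card α - j * k).factorial * (Fintype.card α).descFactorial (j * k) := by
        rw [sum_congr rfl fun f _ => card_semiconj_embedding _ f, sum_const, card_univ,
          Fintype.card_embedding_eq, smul_eq_mul, Fintype.card_prod, Fintype.card_fin,
          Fintype.card_fin, mul_comm]
    _ = (Fintype.card α).factorial := Nat.factorial_mul_descFactorial hj

theorem card_forall_minimalPeriod_ne_div_factorial :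
    (Nat.card {σ : Perm α // ∀ x, minimalPeriod σ x ≠ k} : ℝ) /
        (Fintype.card α).factorial =
      ∑ i ∈ range (Fintype.card α / k + 1), (-1 / k : ℝ) ^ i / i.factorial := by
  set n := Fintype.card α
  have hmoment {i : ℕ} (hi : i ∈ range (n / k + 1)) :
      ∑ σ : Perm α, ((σ.numCyclesOfLength k).choose i : ℝ) =
        n.factorial / (i.factorial * k ^ i) := by
    have hik : i * k ≤ n :=
      (Nat.mul_le_mul_right k (Nat.lt_succ_iff.1 (mem_range.1 hi))).trans
        (Nat.div_mul_le_self _ _)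
    have hk : (k : ℝ) ≠ 0 := Nat.cast_ne_zero.2 (NeZero.ne k)
    rw [eq_div_iff (by positivity), ← sum_descFactorial_numCyclesOfLength_mul_pow hik, sum_mul]
    push_cast [Nat.descFactorial_eq_factorial_mul_choose]
    exact sum_congr rfl fun σ _ => by ring
  have hindicator (σ : Perm α) : (if σ.numCyclesOfLength k = 0 then 1 else 0 : ℝ) =
      ∑ i ∈ range (n / k + 1), (-1) ^ i * ((σ.numCyclesOfLength k).choose i : ℝ) :=
    (alternating_sum_range_choose_of_le (numCyclesOfLength_le (NeZero.pos k) σ)).symm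
  calc (Nat.card {σ : Perm α // ∀ x, minimalPeriod σ x ≠ k} : ℝ) / n.factorial
      = (∑ σ : Perm α, if σ.numCyclesOfLength k = 0 then 1 else 0 : ℝ) / n.factorial := by
        simp_rw [← numCyclesOfLength_eq_zero_iff]
        rw [Nat.card_eq_fintype_card, Fintype.card_subtype, card_filter]
        push_cast
        rfl
    _ = ∑ i ∈ range (n / k + 1), (-1) ^ i *
          ((∑ σ : Perm α, ((σ.numCyclesOfLength k).choose i : ℝ)) / n.factorial) := by
        simp_rw [hindicator, sum_comm (s := univ), sum_div, mul_sum, mul_div_assoc]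
    _ = ∑ i ∈ range (n / k + 1), (-1 / k : ℝ) ^ i / i.factorial := by
        refine sum_congr rfl fun i hi => ?_
        rw [hmoment hi, div_pow]
        field_simp

end Equiv.Perm

/-- For any fixed `k ≥ 1`, the probability that a uniformly random permutation of an
`n`-element set has no cycle of length exactly `k` tends to `e^{-1/k}` as `n → ∞`.
(The cycle length of a point `x` under `σ` is `Function.minimalPeriod σ x`.) -/
theorem no_k_cycle_prob_tendsto (k : ℕ) (hk : 1 ≤ k) :
    Tendsto
      (fun n =>
        (Nat.card {σ : Equiv.Perm (Fin n) // ∀ x, Function.minimalPeriod (⇑σ) x ≠ k} : ℝ) /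
          (Nat.factorial n))
      atTop (nhds (Real.exp (-1 / k))) := by
  have : NeZero k := ⟨by omega⟩
  have hexp : Tendsto (fun N => ∑ i ∈ range N, (-1 / k : ℝ) ^ i / i.factorial) atTop
      (nhds (Real.exp (-1 / k))) := by
    rw [Real.exp_eq_exp_ℝ]
    exact (NormedSpace.expSeries_div_hasSum_exp (-1 / k : ℝ)).tendsto_sum_nat
  have hN : Tendsto (fun n => n / k + 1) atTop atTop :=
    (tendsto_add_atTop_nat 1).comp (Nat.tendsto_div_const_atTop (NeZero.ne k))
  refine (hexp.comp hN).congr fun n => ?_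
  simpa using (Equiv.Perm.card_forall_minimalPeriod_ne_div_factorial (α := Fin n) (k := k)).symm
end
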